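/- arXiv:1304.7207 — 8 statements merged into one kernel-verified Lean document; each statement's English description precedes it below -/
import Mathlib

section
/- Let W be an abelian group equipped with a binary relation ⊥, and let V and G be uniquely 2-divisible abelian groups. Suppose φ, ψ : V → W are additive mappings such that φ(x) ⊥ ψ(y) for all x, y ∈ V and (φ+ψ)(x) ⊥ (φ−ψ)(y) for all x, y ∈ V, and let W₀ = φ(V) + ψ(V). If f : W → G is a ⊥-additive mapping that is odd (f(−x) = −f(x) for all x ∈ W), then f is additive on W₀, i.e. f(x + y) = f(x) + f(y) for all x, y ∈ W₀. -/
/-- Lemma 2.1 (i), odd case.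
Let `W` be an abelian group with a binary relation `⊥` (`perp`), and `V`, `G` uniquely
2-divisible abelian groups.  Suppose `φ ψ : V → W` are additive with `φ(V) ⊥ ψ(V)` and
`(φ+ψ)(V) ⊥ (φ−ψ)(V)`, and let `W₀ = φ(V) + ψ(V)`.  If `f : W → G` is `⊥`-additive and odd,
then `f` is additive on `W₀`. -/
theorem orthogonally_additive_odd_is_additive
    {W V G : Type*} [AddCommGroup W] [AddCommGroup V] [AddCommGroup G]
    (perp : W → W → Prop)
    (hV2 : ∀ v : V, ∃! u : V, u + u = v)
    (hG2 : ∀ g : G, ∃! h : G, h + h = g)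
    (φ ψ : V → W)
    (hφ : ∀ x y : V, φ (x + y) = φ x + φ y)
    (hψ : ∀ x y : V, ψ (x + y) = ψ x + ψ y)
    (hperp₁ : ∀ x y : V, perp (φ x) (ψ y))
    (hperp₂ : ∀ x y : V, perp (φ x + ψ x) (φ y - ψ y))
    (W₀ : Set W) (hW₀ : W₀ = {w : W | ∃ a b : V, φ a + ψ b = w})
    (f : W → G)
    (hf : ∀ x y : W, perp x y → f (x + y) = f x + f y)
    (hodd : ∀ x : W, f (-x) = -f x) :
    ∀ x ∈ W₀, ∀ y ∈ W₀, f (x + y) = f x + f y := by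
  have hGinj : ∀ a b : G, a + a = b + b → a = b := by
    intro a b h
    exact ((hG2 (b + b)).unique h rfl)
  have hφ0 : φ 0 = 0 := by
    have := hφ 0 0; rw [add_zero] at this; exact (left_eq_add.mp this)
  have hψ0 : ψ 0 = 0 := by
    have := hψ 0 0; rw [add_zero] at this; exact (left_eq_add.mp this)
  have hφneg : ∀ x : V, φ (-x) = -φ x := by
    intro x
    have := hφ x (-x); rw [add_neg_cancel, hφ0] at this
    exact eq_neg_of_add_eq_zero_right this.symm
  have hψneg : ∀ x : V, ψ (-x) = -ψ x := by
    intro x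
    have := hψ x (-x); rw [add_neg_cancel, hψ0] at this
    exact eq_neg_of_add_eq_zero_right this.symm
  -- key identity
  have key : ∀ x y : V, f (φ (x + y)) + f (ψ (x - y)) =
      f (φ x) + f (ψ x) + f (φ y) - f (ψ y) := by
    intro x y
    have h1 := hf _ _ (hperp₂ x y)
    have h2 := hf _ _ (hperp₁ (x + y) (x - y))
    have h3 := hf _ _ (hperp₁ x x)
    have h4 := hf _ _ (hperp₁ y (-y))
    rw [hψneg y, hodd (ψ y)] at h4
    have harg : φ x + ψ x + (φ y - ψ y) = φ (x + y) + ψ (x - y) := by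
      rw [hφ x y, sub_eq_add_neg x y, hψ x (-y), hψneg y]; abel
    rw [harg, h2, h3] at h1
    rw [h1, sub_eq_add_neg (φ y) (ψ y), h4]; abel
  have hfφ : ∀ x y : V, f (φ (x + y)) = f (φ x) + f (φ y) := by
    intro x y
    have k1 := key x y
    have k2 := key y x
    rw [add_comm y x] at k2
    have : y - x = -(x - y) := by abel
    rw [this, hψneg, hodd] at k2
    apply hGinj
    have := congrArg₂ (· + ·) k1 k2
    calc f (φ (x + y)) + f (φ (x + y))
        = f (φ (x + y)) + f (ψ (x - y)) + (f (φ (x + y)) + -f (ψ (x - y))) := by abel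
      _ = f (φ x) + f (ψ x) + f (φ y) - f (ψ y)
          + (f (φ y) + f (ψ y) + f (φ x) - f (ψ x)) := by rw [k1, k2]
      _ = f (φ x) + f (φ y) + (f (φ x) + f (φ y)) := by abel
  have hfψsub : ∀ x y : V, f (ψ (x - y)) = f (ψ x) - f (ψ y) := by
    intro x y
    have k1 := key x y
    have k2 := key y x
    rw [add_comm y x] at k2
    have : y - x = -(x - y) := by abel
    rw [this, hψneg, hodd] at k2
    apply hGinj
    calc f (ψ (x - y)) + f (ψ (x - y))
        = f (φ (x + y)) + f (ψ (x - y)) - (f (φ (x + y)) + -f (ψ (x - y))) := by abel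
      _ = f (φ x) + f (ψ x) + f (φ y) - f (ψ y)
          - (f (φ y) + f (ψ y) + f (φ x) - f (ψ x)) := by rw [k1, k2]
      _ = f (ψ x) - f (ψ y) + (f (ψ x) - f (ψ y)) := by abel
  have hfψ : ∀ x y : V, f (ψ (x + y)) = f (ψ x) + f (ψ y) := by
    intro x y
    have := hfψsub (x + y) y
    rw [add_sub_cancel_right] at this
    rw [this]; abel
  subst hW₀
  rintro x ⟨a, b, rfl⟩ y ⟨c, d, rfl⟩
  have hsplit : ∀ u v : V, f (φ u + ψ v) = f (φ u) + f (ψ v) :=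
    fun u v => hf _ _ (hperp₁ u v)
  have harg : φ a + ψ b + (φ c + ψ d) = φ (a + c) + ψ (b + d) := by
    rw [hφ, hψ]; abel
  rw [harg, hsplit, hsplit, hsplit, hfφ, hfψ]
  abel
end

section
/- Let W be an abelian group equipped with a binary relation ⊥, and let V and G be uniquely 2-divisible abelian groups. Suppose φ, ψ : V → W are additive mappings such that φ(x) ⊥ ψ(y) for all x, y ∈ V and (φ+ψ)(x) ⊥ (φ−ψ)(y) for all x, y ∈ V, and let W₀ = φ(V) + ψ(V). If f : W → G is a ⊥-additive mapping that is even (f(−x) = f(x) for all x ∈ W), then f is quadratic on W₀, i.e. f(x + y) + f(x − y) = 2f(x) + 2f(y) for all x, y ∈ W₀. -/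
/-- Lemma 2.1 (i), even case.
Let `W` be an abelian group with a binary relation `⊥` (`perp`), and `V`, `G` uniquely
2-divisible abelian groups.  Suppose `φ ψ : V → W` are additive with `φ(V) ⊥ ψ(V)` and
`(φ+ψ)(V) ⊥ (φ−ψ)(V)`, and let `W₀ = φ(V) + ψ(V)`.  If `f : W → G` is `⊥`-additive and even,
then `f` is quadratic on `W₀`. -/
theorem orthogonally_additive_even_is_quadratic
    {W V G : Type*} [AddCommGroup W] [AddCommGroup V] [AddCommGroup G]
    (perp : W → W → Prop)
    (hV2 : ∀ v : V, ∃! u : V, u + u = v)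
    (hG2 : ∀ g : G, ∃! h : G, h + h = g)
    (φ ψ : V → W)
    (hφ : ∀ x y : V, φ (x + y) = φ x + φ y)
    (hψ : ∀ x y : V, ψ (x + y) = ψ x + ψ y)
    (hperp₁ : ∀ x y : V, perp (φ x) (ψ y))
    (hperp₂ : ∀ x y : V, perp (φ x + ψ x) (φ y - ψ y))
    (W₀ : Set W) (hW₀ : W₀ = {w : W | ∃ a b : V, φ a + ψ b = w})
    (f : W → G)
    (hf : ∀ x y : W, perp x y → f (x + y) = f x + f y)
    (heven : ∀ x : W, f (-x) = f x) :
    ∀ x ∈ W₀, ∀ y ∈ W₀, f (x + y) + f (x - y) = 2 • f x + 2 • f y := by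
  subst hW₀
  have hφ0 : φ 0 = 0 := by
    have h := hφ 0 0
    simp only [add_zero] at h
    exact (left_eq_add.mp h)
  have hψ0 : ψ 0 = 0 := by
    have h := hψ 0 0
    simp only [add_zero] at h
    exact (left_eq_add.mp h)
  have hφneg : ∀ u : V, φ (-u) = -φ u := by
    intro u
    have h := hφ u (-u)
    rw [add_neg_cancel, hφ0] at h
    exact eq_neg_of_add_eq_zero_right h.symm
  have hψneg : ∀ u : V, ψ (-u) = -ψ u := by
    intro u
    have h := hψ u (-u)
    rw [add_neg_cancel, hψ0] at h
    exact eq_neg_of_add_eq_zero_right h.symm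
  have hf0 : f 0 = 0 := by
    have hp : perp (0 : W) 0 := by
      have := hperp₁ 0 0
      rwa [hφ0, hψ0] at this
    have h := hf 0 0 hp
    simp only [add_zero] at h
    exact (left_eq_add.mp h)
  -- key identity
  have key : ∀ u v : V, f (φ (u + v)) + f (ψ (u - v)) =
      (f (φ u) + f (ψ u)) + (f (φ v) + f (ψ v)) := by
    intro u v
    have h := hf _ _ (hperp₂ u v)
    have e1 : φ u + ψ u + (φ v - ψ v) = φ (u + v) + ψ (u - v) := by
      rw [hφ u v, sub_eq_add_neg u v, hψ u (-v), hψneg]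
      abel
    have h2 : f (φ u + ψ u) = f (φ u) + f (ψ u) := hf _ _ (hperp₁ u u)
    have h3 : f (φ v - ψ v) = f (φ v) + f (ψ v) := by
      have h' := hf (φ v) (ψ (-v)) (hperp₁ v (-v))
      rw [hψneg, heven] at h'
      rw [sub_eq_add_neg]
      exact h'
    rw [e1, hf _ _ (hperp₁ (u + v) (u - v)), h2, h3] at h
    exact h
  -- f ∘ ψ = f ∘ φ
  have hFeq : ∀ v : V, f (ψ v) = f (φ v) := by
    intro v
    obtain ⟨u, hu, -⟩ := hV2 v
    have k1 := key u u
    rw [sub_self, hψ0, hf0, add_zero] at k1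
    have k2 := key u (-u)
    rw [add_neg_cancel, sub_neg_eq_add, hφ0, hf0, zero_add, hφneg, hψneg,
      heven, heven] at k2
    rw [← hu, k2, ← k1]
  -- quadratic identity for f ∘ φ
  have hQ : ∀ u v : V, f (φ (u + v)) + f (φ (u - v)) =
      2 • f (φ u) + 2 • f (φ v) := by
    intro u v
    have h := key u v
    rw [hFeq (u - v), hFeq u, hFeq v, two_smul, two_smul] at *
    exact h
  rintro x ⟨a, b, rfl⟩ y ⟨c, d, rfl⟩
  have e1 : φ a + ψ b + (φ c + ψ d) = φ (a + c) + ψ (b + d) := by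
    rw [hφ, hψ]; abel
  have e2 : φ a + ψ b - (φ c + ψ d) = φ (a - c) + ψ (b - d) := by
    rw [sub_eq_add_neg a c, sub_eq_add_neg b d, hφ, hψ, hφneg, hψneg]; abel
  rw [e1, e2, hf _ _ (hperp₁ (a + c) (b + d)), hf _ _ (hperp₁ (a - c) (b - d)),
    hf _ _ (hperp₁ a b), hf _ _ (hperp₁ c d),
    hFeq (b + d), hFeq (b - d), hFeq b, hFeq d]
  calc f (φ (a + c)) + f (φ (b + d)) + (f (φ (a - c)) + f (φ (b - d)))
      = (f (φ (a + c)) + f (φ (a - c))) + (f (φ (b + d)) + f (φ (b - d))) := by abel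
    _ = (2 • f (φ a) + 2 • f (φ c)) + (2 • f (φ b) + 2 • f (φ d)) := by
        rw [hQ a c, hQ b d]
    _ = 2 • (f (φ a) + f (φ b)) + 2 • (f (φ c) + f (φ d)) := by
        rw [smul_add, smul_add]; abel
end

section
/- Let W be an abelian group equipped with a binary relation ⊥ such that x ⊥ y implies (−x) ⊥ (−y), and let V and G be uniquely 2-divisible abelian groups. Suppose φ, ψ : V → W are additive mappings such that φ(x) ⊥ ψ(y) for all x, y ∈ V and (φ+ψ)(x) ⊥ (φ−ψ)(y) for all x, y ∈ V, and let W₀ = φ(V) + ψ(V). If f : W → G is a ⊥-additive mapping, then there exist mappings T : W → G and B : W × W → G such that T is additive on W₀, B is symmetric, biadditive on W₀ × W₀, ⊥-preserving on W₀ × W₀, and f(x) = T(x) + B(x, x) for all x ∈ W₀. -/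
private theorem add_eqs' {G : Type*} [AddCommGroup G] {a b c d : G}
    (h1 : a = b) (h2 : c = d) : a + c = b + d := by rw [h1, h2]

private theorem combo2' {G : Type*} [AddCommGroup G] {A B X Y : G}
    (h : A = B) (e : X + B = Y + A) : X = Y := by
  have e2 : X + B = Y + B := by rw [e, h]
  exact add_right_cancel e2

/-- Lemma 2.1 (ii).
Let `W` be an abelian group with a binary relation `⊥` (`perp`) such that `x ⊥ y` implies
`(-x) ⊥ (-y)`, and let `V`, `G` be uniquely 2-divisible abelian groups.  Suppose `φ ψ : V → W`
are additive with `φ(V) ⊥ ψ(V)` and `(φ+ψ)(V) ⊥ (φ−ψ)(V)`, and let `W₀ = φ(V) + ψ(V)`.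
If `f : W → G` is `⊥`-additive, then there are `T : W → G`, additive on `W₀`, and
`B : W × W → G`, symmetric, biadditive and `⊥`-preserving on `W₀ × W₀`, with
`f(x) = T(x) + B(x,x)` on `W₀`. -/
theorem orthogonally_additive_decomposition
    {W V G : Type*} [AddCommGroup W] [AddCommGroup V] [AddCommGroup G]
    (perp : W → W → Prop)
    (hperpneg : ∀ x y : W, perp x y → perp (-x) (-y))
    (hV2 : ∀ v : V, ∃! u : V, u + u = v)
    (hG2 : ∀ g : G, ∃! h : G, h + h = g)
    (φ ψ : V → W)
    (hφ : ∀ x y : V, φ (x + y) = φ x + φ y)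
    (hψ : ∀ x y : V, ψ (x + y) = ψ x + ψ y)
    (hperp₁ : ∀ x y : V, perp (φ x) (ψ y))
    (hperp₂ : ∀ x y : V, perp (φ x + ψ x) (φ y - ψ y))
    (W₀ : Set W) (hW₀ : W₀ = {w : W | ∃ a b : V, φ a + ψ b = w})
    (f : W → G)
    (hf : ∀ x y : W, perp x y → f (x + y) = f x + f y) :
    ∃ (T : W → G) (B : W → W → G),
      (∀ x ∈ W₀, ∀ y ∈ W₀, T (x + y) = T x + T y) ∧
      (∀ x ∈ W₀, ∀ y ∈ W₀, B x y = B y x) ∧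
      (∀ x ∈ W₀, ∀ y ∈ W₀, ∀ z ∈ W₀, B (x + y) z = B x z + B y z) ∧
      (∀ x ∈ W₀, ∀ y ∈ W₀, ∀ z ∈ W₀, B x (y + z) = B x y + B x z) ∧
      (∀ x ∈ W₀, ∀ y ∈ W₀, perp x y → B x y = 0) ∧
      (∀ x ∈ W₀, f x = T x + B x x) := by
  classical
  -- halving in G
  choose h2 hh2' hun2' using hG2
  choose halfV hhalfV' _hunV using hV2
  have hh2 : ∀ g : G, h2 g + h2 g = g := hh2'
  have hun2 : ∀ g y : G, y + y = g → y = h2 g := hun2'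
  have hhalfV : ∀ v : V, halfV v + halfV v = v := hhalfV'
  have cancelG : ∀ a b : G, a + a = b + b → a = b := fun a b h =>
    (hun2 (a + a) a rfl).trans (hun2 (a + a) b h.symm).symm
  have h2add : ∀ a b : G, h2 (a + b) = h2 a + h2 b := by
    intro a b
    refine (hun2 (a + b) (h2 a + h2 b) ?_).symm
    rw [add_add_add_comm, hh2, hh2]
  have h2zero : h2 (0 : G) = 0 := (hun2 0 0 (by rw [add_zero])).symm
  -- basic homomorphism facts
  have φ0 : φ 0 = 0 := by
    have h := hφ 0 0
    rw [add_zero] at h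
    exact (left_eq_add.mp h)
  have ψ0 : ψ 0 = 0 := by
    have h := hψ 0 0
    rw [add_zero] at h
    exact (left_eq_add.mp h)
  have φneg : ∀ a : V, φ (-a) = -φ a := by
    intro a
    have h := hφ a (-a)
    rw [add_neg_cancel, φ0] at h
    exact eq_neg_of_add_eq_zero_right h.symm
  have ψneg : ∀ a : V, ψ (-a) = -ψ a := by
    intro a
    have h := hψ a (-a)
    rw [add_neg_cancel, ψ0] at h
    exact eq_neg_of_add_eq_zero_right h.symm
  have ψsub : ∀ a b : V, ψ (a - b) = ψ a - ψ b := by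
    intro a b
    rw [sub_eq_add_neg a b, hψ, ψneg, ← sub_eq_add_neg]
  have f0 : f 0 = 0 := by
    have hp := hperp₁ 0 0
    rw [φ0, ψ0] at hp
    have h := hf 0 0 hp
    rw [add_zero] at h
    exact (left_eq_add.mp h)
  have hfrep : ∀ a b : V, f (φ a + ψ b) = f (φ a) + f (ψ b) :=
    fun a b => hf _ _ (hperp₁ a b)
  -- the fundamental relation
  have L1 : ∀ a b : V, f (φ (a + b)) + f (ψ (a - b)) =
      (f (φ a) + f (ψ a)) + (f (φ b) + f (ψ (-b))) := by
    intro a b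
    have e0 := hf _ _ (hperp₂ a b)
    rw [show (φ a + ψ a) + (φ b - ψ b) = φ (a + b) + ψ (a - b) from by
          rw [hφ, ψsub]; abel] at e0
    rw [hf _ _ (hperp₁ (a + b) (a - b))] at e0
    rw [hf _ _ (hperp₁ a a)] at e0
    rw [show φ b - ψ b = φ b + ψ (-b) from by rw [ψneg, ← sub_eq_add_neg]] at e0
    rw [hf _ _ (hperp₁ b (-b))] at e0
    exact e0
  -- the four structural identities
  have MAIN : ∀ a b : V,
      ((f (φ (a+b)) + f (ψ (a+b))) - (f (φ (-(a+b))) + f (ψ (-(a+b)))) =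
        ((f (φ a) + f (ψ a)) - (f (φ (-a)) + f (ψ (-a)))) +
        ((f (φ b) + f (ψ b)) - (f (φ (-b)) + f (ψ (-b))))) ∧
      ((f (φ (a+b)) - f (ψ (a+b))) - (f (φ (-(a+b))) - f (ψ (-(a+b)))) =
        ((f (φ a) - f (ψ a)) - (f (φ (-a)) - f (ψ (-a)))) +
        ((f (φ b) - f (ψ b)) - (f (φ (-b)) - f (ψ (-b))))) ∧
      (((f (φ (a+b)) + f (ψ (a+b))) + (f (φ (-(a+b))) + f (ψ (-(a+b))))) +
        ((f (φ (a-b)) + f (ψ (a-b))) + (f (φ (-(a-b))) + f (ψ (-(a-b))))) =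
        (((f (φ a) + f (ψ a)) + (f (φ (-a)) + f (ψ (-a)))) +
          ((f (φ a) + f (ψ a)) + (f (φ (-a)) + f (ψ (-a))))) +
        (((f (φ b) + f (ψ b)) + (f (φ (-b)) + f (ψ (-b)))) +
          ((f (φ b) + f (ψ b)) + (f (φ (-b)) + f (ψ (-b)))))) ∧
      (((f (φ (a+b)) - f (ψ (a+b))) + (f (φ (-(a+b))) - f (ψ (-(a+b))))) =
        ((f (φ (a-b)) - f (ψ (a-b))) + (f (φ (-(a-b))) - f (ψ (-(a-b)))))) := by
    intro a b
    have i1 := L1 a b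
    have i2 := L1 a (-b)
    rw [show a + -b = a - b from by abel, show a - -b = a + b from by abel, neg_neg] at i2
    have i3 := L1 (-a) (-b)
    rw [show -a + -b = -(a+b) from by abel, show -a - -b = -(a-b) from by abel, neg_neg] at i3
    have i4 := L1 (-a) b
    rw [show -a + b = -(a-b) from by abel, show -a - b = -(a+b) from by abel] at i4
    have i5 := L1 b a
    rw [show b + a = a + b from by abel, show b - a = -(a-b) from by abel] at i5
    have i6 := L1 b (-a)
    rw [show b + -a = -(a-b) from by abel, show b - -a = a + b from by abel, neg_neg] at i6
    have i7 := L1 (-b) (-a)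
    rw [show -b + -a = -(a+b) from by abel, show -b - -a = a - b from by abel, neg_neg] at i7
    have i8 := L1 (-b) a
    rw [show -b + a = a - b from by abel, show -b - a = -(a+b) from by abel] at i8
    refine ⟨?_, ?_, ?_, ?_⟩
    · exact cancelG _ _ (combo2' (add_eqs' i1 (add_eqs' i2 (add_eqs' i5 (add_eqs' i6
        (add_eqs' i3.symm (add_eqs' i4.symm (add_eqs' i7.symm i8.symm))))))) (by abel))
    · exact cancelG _ _ (combo2' (add_eqs' i1 (add_eqs' i5 (add_eqs' i4 (add_eqs' i8
        (add_eqs' i2.symm (add_eqs' i6.symm (add_eqs' i3.symm i7.symm))))))) (by abel))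
    · exact combo2' (add_eqs' i1 (add_eqs' i2 (add_eqs' i3 i4))) (by abel)
    · exact combo2' (add_eqs' i1 (add_eqs' i3 (add_eqs' i2.symm i4.symm))) (by abel)
  -- the "difference of even parts" vanishes
  have hQD0 : ∀ u : V, (f (φ u) - f (ψ u)) + (f (φ (-u)) - f (ψ (-u))) = 0 := by
    intro u
    have h := (MAIN (halfV u) (halfV u)).2.2.2
    rw [hhalfV u, sub_self] at h
    rw [h, neg_zero, φ0, ψ0, f0]
    abel
  -- odd parts of f∘φ and f∘ψ are additive
  have hgo : ∀ a b : V, f (φ (a+b)) - f (φ (-(a+b))) =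
      (f (φ a) - f (φ (-a))) + (f (φ b) - f (φ (-b))) := by
    intro a b
    exact cancelG _ _ (combo2' (add_eqs' (MAIN a b).1 (MAIN a b).2.1) (by abel))
  have hko : ∀ a b : V, f (ψ (a+b)) - f (ψ (-(a+b))) =
      (f (ψ a) - f (ψ (-a))) + (f (ψ b) - f (ψ (-b))) := by
    intro a b
    exact cancelG _ _ (combo2' (add_eqs' (MAIN a b).1 ((MAIN a b).2.1).symm) (by abel))
  -- even parts are quadratic
  have hgequad : ∀ a b : V, (f (φ (a+b)) + f (φ (-(a+b)))) + (f (φ (a-b)) + f (φ (-(a-b)))) =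
      ((f (φ a) + f (φ (-a))) + (f (φ a) + f (φ (-a)))) +
      ((f (φ b) + f (φ (-b))) + (f (φ b) + f (φ (-b)))) := by
    intro a b
    exact cancelG _ _ (combo2' (add_eqs' (MAIN a b).2.2.1 (add_eqs' (hQD0 (a+b))
      (add_eqs' (hQD0 (a-b)) (add_eqs' (hQD0 a).symm (add_eqs' (hQD0 a).symm
        (add_eqs' (hQD0 b).symm (hQD0 b).symm)))))) (by abel))
  have hkequad : ∀ a b : V, (f (ψ (a+b)) + f (ψ (-(a+b)))) + (f (ψ (a-b)) + f (ψ (-(a-b)))) =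
      ((f (ψ a) + f (ψ (-a))) + (f (ψ a) + f (ψ (-a)))) +
      ((f (ψ b) + f (ψ (-b))) + (f (ψ b) + f (ψ (-b)))) := by
    intro a b
    exact cancelG _ _ (combo2' (add_eqs' (MAIN a b).2.2.1 (add_eqs' (hQD0 (a+b)).symm
      (add_eqs' (hQD0 (a-b)).symm (add_eqs' (hQD0 a) (add_eqs' (hQD0 a)
        (add_eqs' (hQD0 b) (hQD0 b))))))) (by abel))
  -- cube identities for the even parts
  have hgecube : ∀ a c e : V,
      (f (φ (a+c+e)) + f (φ (-(a+c+e)))) +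
        (((f (φ a) + f (φ (-a))) + (f (φ c) + f (φ (-c)))) + (f (φ e) + f (φ (-e)))) =
      ((f (φ (a+c)) + f (φ (-(a+c)))) + (f (φ (c+e)) + f (φ (-(c+e))))) +
        (f (φ (a+e)) + f (φ (-(a+e)))) := by
    intro a c e
    have J1 := hgequad (a+e) c
    rw [show a+e+c = a+c+e from by abel] at J1
    have J2 := hgequad a (e-c)
    rw [show a+(e-c) = a+e-c from by abel, show a-(e-c) = a+c-e from by abel] at J2
    have J3 := hgequad (a+c) e
    have J4 := hgequad e c
    rw [show e+c = c+e from by abel] at J4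
    exact cancelG _ _ (combo2' (add_eqs' J1 (add_eqs' J3 (add_eqs' J2.symm
      (add_eqs' J4.symm J4.symm)))) (by abel))
  have hkecube : ∀ a c e : V,
      (f (ψ (a+c+e)) + f (ψ (-(a+c+e)))) +
        (((f (ψ a) + f (ψ (-a))) + (f (ψ c) + f (ψ (-c)))) + (f (ψ e) + f (ψ (-e)))) =
      ((f (ψ (a+c)) + f (ψ (-(a+c)))) + (f (ψ (c+e)) + f (ψ (-(c+e))))) +
        (f (ψ (a+e)) + f (ψ (-(a+e)))) := by
    intro a c e
    have J1 := hkequad (a+e) c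
    rw [show a+e+c = a+c+e from by abel] at J1
    have J2 := hkequad a (e-c)
    rw [show a+(e-c) = a+e-c from by abel, show a-(e-c) = a+c-e from by abel] at J2
    have J3 := hkequad (a+c) e
    have J4 := hkequad e c
    rw [show e+c = c+e from by abel] at J4
    exact cancelG _ _ (combo2' (add_eqs' J1 (add_eqs' J3 (add_eqs' J2.symm
      (add_eqs' J4.symm J4.symm)))) (by abel))
  have hge0 : f (φ (0:V)) + f (φ (-(0:V))) = 0 := by
    rw [neg_zero, φ0, f0, add_zero]
  have hke0 : f (ψ (0:V)) + f (ψ (-(0:V))) = 0 := by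
    rw [neg_zero, ψ0, f0, add_zero]
  -- the candidate maps
  set Qf : W → G := fun x => f x + f (-x) with hQdef
  set Bb : W → W → G := fun x y => h2 (h2 (Qf (x + y) - Qf x - Qf y)) with hBdef
  set Tf : W → G := fun x => f x - Bb x x with hTdef
  have hQrep : ∀ a b : V, Qf (φ a + ψ b) =
      (f (φ a) + f (φ (-a))) + (f (ψ b) + f (ψ (-b))) := by
    intro a b
    simp only [hQdef]
    rw [show -(φ a + ψ b) = φ (-a) + ψ (-b) from by rw [φneg, ψneg]; abel,
      hfrep a b, hfrep (-a) (-b)]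
    abel
  have hBxx : ∀ a b : V, Bb (φ a + ψ b) (φ a + ψ b) = h2 (Qf (φ a + ψ b)) := by
    intro a b
    simp only [hBdef]
    have key : Qf ((φ a + ψ b) + (φ a + ψ b)) - Qf (φ a + ψ b) - Qf (φ a + ψ b) =
        Qf (φ a + ψ b) + Qf (φ a + ψ b) := by
      rw [show (φ a + ψ b) + (φ a + ψ b) = φ (a + a) + ψ (b + b) from by
            rw [hφ a a, hψ b b]; abel]
      simp only [hQrep]
      have G1 := hgequad a a
      rw [sub_self] at G1
      have K1 := hkequad b b
      rw [sub_self] at K1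
      exact combo2' (add_eqs' hge0.symm (add_eqs' hke0.symm (add_eqs' G1 K1))) (by abel)
    rw [key]
    exact congrArg h2 ((hun2 _ _ rfl).symm)
  have hT2 : ∀ a b : V, Tf (φ a + ψ b) + Tf (φ a + ψ b) =
      (f (φ a) - f (φ (-a))) + (f (ψ b) - f (ψ (-b))) := by
    intro a b
    simp only [hTdef]
    rw [hBxx a b]
    refine combo2' (add_eqs' (hfrep a b) (add_eqs' (hfrep a b)
      (add_eqs' (hh2 (Qf (φ a + ψ b))).symm (hQrep a b).symm))) ?_
    abel
  have hsymB : ∀ x y : W, Bb x y = Bb y x := by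
    intro x y
    simp only [hBdef]
    rw [add_comm x y, show Qf (y + x) - Qf x - Qf y = Qf (y + x) - Qf y - Qf x from by abel]
  have hadd1 : ∀ x ∈ W₀, ∀ y ∈ W₀, ∀ z ∈ W₀, Bb (x + y) z = Bb x z + Bb y z := by
    intro x hx y hy z hz
    simp only [hW₀, Set.mem_setOf_eq] at hx hy hz
    obtain ⟨a, b, rfl⟩ := hx
    obtain ⟨c, d, rfl⟩ := hy
    obtain ⟨e, p, rfl⟩ := hz
    have hkey : Qf (φ (a+c+e) + ψ (b+d+p)) - Qf (φ (a+c) + ψ (b+d)) - Qf (φ e + ψ p) =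
        (Qf (φ (a+e) + ψ (b+p)) - Qf (φ a + ψ b) - Qf (φ e + ψ p)) +
        (Qf (φ (c+e) + ψ (d+p)) - Qf (φ c + ψ d) - Qf (φ e + ψ p)) := by
      simp only [hQrep]
      exact combo2' (add_eqs' (hgecube a c e) (hkecube b d p)) (by abel)
    simp only [hBdef]
    rw [show (φ a + ψ b) + (φ c + ψ d) = φ (a+c) + ψ (b+d) from by rw [hφ a c, hψ b d]; abel,
      show (φ (a+c) + ψ (b+d)) + (φ e + ψ p) = φ (a+c+e) + ψ (b+d+p) from by
        rw [hφ (a+c) e, hψ (b+d) p]; abel,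
      show (φ a + ψ b) + (φ e + ψ p) = φ (a+e) + ψ (b+p) from by rw [hφ a e, hψ b p]; abel,
      show (φ c + ψ d) + (φ e + ψ p) = φ (c+e) + ψ (d+p) from by rw [hφ c e, hψ d p]; abel,
      hkey,
      h2add (Qf (φ (a+e) + ψ (b+p)) - Qf (φ a + ψ b) - Qf (φ e + ψ p))
        (Qf (φ (c+e) + ψ (d+p)) - Qf (φ c + ψ d) - Qf (φ e + ψ p)),
      h2add (h2 (Qf (φ (a+e) + ψ (b+p)) - Qf (φ a + ψ b) - Qf (φ e + ψ p)))
        (h2 (Qf (φ (c+e) + ψ (d+p)) - Qf (φ c + ψ d) - Qf (φ e + ψ p)))]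
  refine ⟨Tf, Bb, ?_, fun x _ y _ => hsymB x y, hadd1, ?_, ?_, ?_⟩
  · -- T additive on W₀
    intro x hx y hy
    simp only [hW₀, Set.mem_setOf_eq] at hx hy
    obtain ⟨a, b, rfl⟩ := hx
    obtain ⟨c, d, rfl⟩ := hy
    rw [show (φ a + ψ b) + (φ c + ψ d) = φ (a+c) + ψ (b+d) from by rw [hφ a c, hψ b d]; abel]
    exact cancelG _ _ (combo2' (add_eqs' (hT2 (a+c) (b+d)) (add_eqs' (hgo a c)
      (add_eqs' (hko b d) (add_eqs' (hT2 a b).symm (hT2 c d).symm)))) (by abel))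
  · -- additivity in the second variable
    intro x hx y hy z hz
    rw [hsymB x (y + z), hadd1 y hy z hz x hx, hsymB y x, hsymB z x]
  · -- perp-preserving
    intro x _ y _ hxy
    simp only [hBdef]
    have hz : Qf (x + y) - Qf x - Qf y = 0 := by
      simp only [hQdef]
      rw [show -(x + y) = -x + -y from by abel, hf x y hxy, hf (-x) (-y) (hperpneg x y hxy)]
      abel
    rw [hz, h2zero, h2zero]
  · -- decomposition
    intro x _
    simp only [hTdef]
    abel
end

section
/- Let W, V, G be complex normed spaces and let ⊥ be a binary relation on W such that x ⊥ y implies (−x) ⊥ (−y). Suppose φ, ψ : V → W are continuous linear mappings such that φ(x) ⊥ ψ(y) for all x, y ∈ V and (φ + λψ)(x) ⊥ (φ − λψ)(y) for all x, y ∈ V and λ ∈ {1, i}, and let W₀ = φ(V) + ψ(V). If f : W → G is a continuous ⊥-additive mapping, then there exist continuous mappings T : W → G and S : W × W → G such that T is additive on W₀, S is sesquilinear on W₀ × W₀, for all x, y ∈ W₀ the relation x ⊥ y implies S(x,y) + S(y,x) = 0, and f(x) = T(x) + S(x,x) for all x ∈ W₀. Moreover, if in addition x ⊥ y implies x ⊥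 iy, then S is ⊥-preserving on W₀ × W₀, i.e. x ⊥ y implies S(x,y) = 0 for x, y ∈ W₀. -/
private lemma aux_half_cancel {G : Type*} [AddCommGroup G] [Module ℂ G] {a b : G}
    (h : a + a = b + b) : a = b := by
  have h2 : (2:ℂ) • a = (2:ℂ) • b := by rw [two_smul, two_smul]; exact h
  calc a = (2:ℂ)⁻¹ • ((2:ℂ) • a) := (inv_smul_smul₀ two_ne_zero a).symm
    _ = (2:ℂ)⁻¹ • ((2:ℂ) • b) := by rw [h2]
    _ = b := inv_smul_smul₀ two_ne_zero b

private lemma aux_P3 {V G : Type*} [AddCommGroup V] [AddCommGroup G] [Module ℂ G]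
    (q : V → G)
    (hpar : ∀ x y, q (x + y) + q (x - y) = q x + q x + (q y + q y)) :
    ∀ x y z, q (x + y + z) + (q x + q y + q z) = q (x + y) + q (x + z) + q (y + z) := by
  intro x y z
  have e1 := hpar (x + y) z
  have e2 := hpar (x + z) y
  rw [show x + z + y = x + y + z by abel, show x + z - y = x - y + z by abel] at e2
  have e4 := hpar x (y - z)
  rw [show x + (y - z) = x + y - z by abel, show x - (y - z) = x - y + z by abel] at e4
  have e5 := hpar y z
  apply aux_half_cancel (G := G)
  linear_combination (norm := abel1) e1 + e2 - e4 - e5 - e5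

private lemma aux_decomp {M : Type*} [AddCommGroup M] [Module ℂ M] (c : ℂ) (v : M) :
    c • v = (c.re:ℂ) • v + (c.im:ℂ) • (Complex.I • v) := by
  rw [smul_smul, ← add_smul, Complex.re_add_im]

open Complex in
/-- Lemma 2.3.
Let `W, V, G` be complex normed spaces and `⊥` (`perp`) a binary relation on `W` such that
`x ⊥ y` implies `(-x) ⊥ (-y)`.  Suppose `φ ψ : V → W` are continuous linear with
`φ(V) ⊥ ψ(V)` and `(φ + λψ)(V) ⊥ (φ − λψ)(V)` for `λ ∈ {1, i}`, and let `W₀ = φ(V) + ψ(V)`.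
If `f : W → G` is continuous and `⊥`-additive, then there are continuous `T : W → G` and
`S : W × W → G` such that `T` is additive on `W₀`, `S` is sesquilinear on `W₀ × W₀`,
`x ⊥ y` implies `S(x,y) + S(y,x) = 0` on `W₀`, and `f(x) = T(x) + S(x,x)` on `W₀`;
moreover if `x ⊥ y` implies `x ⊥ iy`, then `S` is `⊥`-preserving on `W₀ × W₀`. -/
theorem continuous_orthogonally_additive_decomposition
    {W V G : Type*}
    [NormedAddCommGroup W] [NormedSpace ℂ W]
    [NormedAddCommGroup V] [NormedSpace ℂ V]
    [NormedAddCommGroup G] [NormedSpace ℂ G]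
    (perp : W → W → Prop)
    (hperpneg : ∀ x y : W, perp x y → perp (-x) (-y))
    (φ ψ : V →L[ℂ] W)
    (hperp₁ : ∀ x y : V, perp (φ x) (ψ y))
    (hperp₂ : ∀ x y : V, perp (φ x + ψ x) (φ y - ψ y))
    (hperp₃ : ∀ x y : V, perp (φ x + I • ψ x) (φ y - I • ψ y))
    (W₀ : Set W) (hW₀ : W₀ = {w : W | ∃ a b : V, φ a + ψ b = w})
    (f : W → G) (hfc : Continuous f)
    (hf : ∀ x y : W, perp x y → f (x + y) = f x + f y) :
    ∃ (T : W → G) (S : W → W → G),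
      Continuous T ∧ Continuous (fun p : W × W => S p.1 p.2) ∧
      (∀ x ∈ W₀, ∀ y ∈ W₀, T (x + y) = T x + T y) ∧
      (∀ x ∈ W₀, ∀ y ∈ W₀, ∀ z ∈ W₀, S (x + y) z = S x z + S y z) ∧
      (∀ x ∈ W₀, ∀ y ∈ W₀, ∀ z ∈ W₀, S x (y + z) = S x y + S x z) ∧
      (∀ (c : ℂ), ∀ x ∈ W₀, ∀ y ∈ W₀, S (c • x) y = c • S x y) ∧
      (∀ (c : ℂ), ∀ x ∈ W₀, ∀ y ∈ W₀, S x (c • y) = (starRingEnd ℂ) c • S x y) ∧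
      (∀ x ∈ W₀, ∀ y ∈ W₀, perp x y → S x y + S y x = 0) ∧
      (∀ x ∈ W₀, f x = T x + S x x) ∧
      ((∀ x y : W, perp x y → perp x (I • y)) →
        ∀ x ∈ W₀, ∀ y ∈ W₀, perp x y → S x y = 0) := by
  have hmem : ∀ x ∈ W₀, ∃ a b : V, φ a + ψ b = x := by
    intro x hx; rw [hW₀] at hx; exact hx
  set g : V → G := fun x => f (φ x) with hgdef
  set k : V → G := fun x => f (ψ x) with hkdef
  have key1 : ∀ a b : V, f (φ a + ψ b) = g a + k b := by
    intro a b; simp only [hgdef, hkdef]; exact hf _ _ (hperp₁ a b)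
  have f0 : f 0 = 0 := by
    have hp := hperp₁ 0 0
    rw [map_zero, map_zero] at hp
    have h0 := hf 0 0 hp
    rw [add_zero] at h0
    exact (left_eq_add.mp h0)
  have g0 : g 0 = 0 := by simp only [hgdef]; rw [map_zero, f0]
  have k0 : k 0 = 0 := by simp only [hkdef]; rw [map_zero, f0]
  have keyA : ∀ x y : V, g (x+y) + k (x-y) = g x + k x + (g y + k (-y)) := by
    intro x y
    have h2 := hf _ _ (hperp₂ x y)
    rw [show φ x + ψ x + (φ y - ψ y) = φ (x+y) + ψ (x-y) by
        rw [map_add, map_sub]; abel] at h2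
    rw [show φ y - ψ y = φ y + ψ (-y) by rw [map_neg]; abel] at h2
    rw [key1, key1, key1] at h2
    exact h2
  have keyB : ∀ x y : V, g (x+y) + k (I•(x-y)) = g x + k (I•x) + (g y + k (-(I•y))) := by
    intro x y
    have h3 := hf _ _ (hperp₃ x y)
    rw [show φ x + I • ψ x + (φ y - I • ψ y) = φ (x+y) + ψ (I•(x-y)) by
        rw [map_add, map_smul, map_sub, smul_sub]; abel] at h3
    rw [show φ x + I • ψ x = φ x + ψ (I•x) by rw [map_smul]] at h3
    rw [show φ y - I • ψ y = φ y + ψ (-(I•y)) by rw [map_neg, map_smul]; abel] at h3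
    rw [key1, key1, key1] at h3
    exact h3
  set E : V → G := fun x => k x - k (-x) with hEdef
  have Esub : ∀ x y : V, E (x - y) = E x - E y := by
    intro x y
    have h1 := keyA x y
    have h2 := keyA y x
    rw [add_comm y x, show y - x = -(x-y) by abel] at h2
    simp only [hEdef]
    linear_combination (norm := abel1) h1 - h2
  have E0 : E 0 = 0 := by simp only [hEdef]; rw [neg_zero, sub_self]
  have Eneg : ∀ y : V, E (-y) = -E y := by
    intro y
    have h := Esub 0 y
    rw [zero_sub, E0, zero_sub] at h
    exact h
  have Eadd : ∀ x y : V, E (x + y) = E x + E y := by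
    intro x y
    have h := Esub x (-y)
    rw [sub_neg_eq_add, Eneg, sub_neg_eq_add] at h
    exact h
  set gOdd : V → G := fun x => g x - g (-x) with hgodef
  have goadd : ∀ x y : V, gOdd (x+y) = gOdd x + gOdd y := by
    intro x y
    have h1 := keyA x y
    have h2 := keyA (-x) (-y)
    rw [show -x + -y = -(x+y) by abel, show -x - -y = -(x-y) by abel, neg_neg] at h2
    have h3 := Esub x y
    simp only [hgodef, hEdef] at h3 ⊢
    linear_combination (norm := abel1) h1 - h2 - h3
  set qv : V → G := fun x => g x + g (-x) with hqvdef
  set kv : V → G := fun x => k x + k (-x) with hkvdef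
  have qv0 : qv 0 = 0 := by simp only [hqvdef]; rw [neg_zero, g0, add_zero]
  have kv0 : kv 0 = 0 := by simp only [hkvdef]; rw [neg_zero, k0, add_zero]
  have qveven : ∀ x : V, qv (-x) = qv x := by
    intro x; simp only [hqvdef]; rw [neg_neg, add_comm]
  have kveven : ∀ x : V, kv (-x) = kv x := by
    intro x; simp only [hkvdef]; rw [neg_neg, add_comm]
  have keyAe : ∀ x y : V, qv (x+y) + kv (x-y) = qv x + kv x + (qv y + kv y) := by
    intro x y
    have h1 := keyA x y
    have h2 := keyA (-x) (-y)
    rw [show -x + -y = -(x+y) by abel, show -x - -y = -(x-y) by abel, neg_neg] at h2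
    simp only [hqvdef, hkvdef]
    linear_combination (norm := abel1) h1 + h2
  have half_add : ∀ u : V, (2:ℂ)⁻¹ • u + (2:ℂ)⁻¹ • u = u := by
    intro u; rw [← add_smul]; norm_num
  have kv_eq_qv : ∀ u : V, kv u = qv u := by
    intro u
    have h1 := keyAe ((2:ℂ)⁻¹ • u) ((2:ℂ)⁻¹ • u)
    rw [half_add, sub_self, kv0, add_zero] at h1
    have h2 := keyAe ((2:ℂ)⁻¹ • u) (-((2:ℂ)⁻¹ • u))
    rw [show (2:ℂ)⁻¹ • u + -((2:ℂ)⁻¹ • u) = (0:V) by abel,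
        show (2:ℂ)⁻¹ • u - -((2:ℂ)⁻¹ • u) = u by rw [sub_neg_eq_add]; exact half_add u,
        qveven, kveven, qv0, zero_add] at h2
    exact h2.trans h1.symm
  have qpar : ∀ x y : V, qv (x+y) + qv (x-y) = qv x + qv x + (qv y + qv y) := by
    intro x y
    have h := keyAe x y
    rw [kv_eq_qv, kv_eq_qv, kv_eq_qv] at h
    exact h
  have keyBe : ∀ x y : V, qv (x+y) + qv (I•(x-y)) = qv x + qv (I•x) + (qv y + qv (I•y)) := by
    intro x y
    have h1 := keyB x y
    have h2 := keyB (-x) (-y)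
    rw [show -x + -y = -(x+y) by abel, show -x - -y = -(x-y) by abel,
        show I•(-(x-y)) = -(I•(x-y)) by rw [smul_neg],
        show I•(-x) = -(I•x) by rw [smul_neg],
        show I•(-y) = -(I•y) by rw [smul_neg], neg_neg] at h2
    have h3 : qv (x+y) + kv (I•(x-y)) = qv x + kv (I•x) + (qv y + kv (I•y)) := by
      simp only [hqvdef, hkvdef]
      linear_combination (norm := abel1) h1 + h2
    rw [kv_eq_qv, kv_eq_qv, kv_eq_qv] at h3
    exact h3
  have qI : ∀ u : V, qv (I•u) = qv u := by
    intro u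
    have h1 := qpar u u
    rw [sub_self, qv0, add_zero] at h1
    have h2 := keyBe u u
    rw [sub_self, smul_zero, qv0, add_zero] at h2
    apply aux_half_cancel (G := G)
    linear_combination (norm := abel1) h1 - h2
  set Bq : V → V → G := fun x y => qv (x+y) - qv x - qv y with hBqdef
  have Bq_addl : ∀ x y z : V, Bq (x+y) z = Bq x z + Bq y z := by
    intro x y z
    have h := aux_P3 qv qpar x y z
    simp only [hBqdef]
    linear_combination (norm := abel1) h
  have Bq_symm : ∀ x y : V, Bq x y = Bq y x := by
    intro x y; simp only [hBqdef]; rw [add_comm x y]; abel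
  have Bq_zerol : ∀ y : V, Bq 0 y = 0 := by
    intro y; simp only [hBqdef]; rw [zero_add, qv0]; abel
  have Bq_addr : ∀ x y z : V, Bq x (y+z) = Bq x y + Bq x z := by
    intro x y z
    rw [Bq_symm x (y+z), Bq_addl, Bq_symm y x, Bq_symm z x]
  have Bq_negl : ∀ x y : V, Bq (-x) y = -Bq x y := by
    intro x y
    have h := Bq_addl x (-x) y
    rw [show x + -x = (0:V) by abel, Bq_zerol] at h
    linear_combination (norm := abel1) -h
  have Bq_negr : ∀ x y : V, Bq x (-y) = -Bq x y := by
    intro x y; rw [Bq_symm, Bq_negl, Bq_symm]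
  have Bq_II : ∀ x y : V, Bq (I•x) (I•y) = Bq x y := by
    intro x y; simp only [hBqdef]; rw [← smul_add, qI, qI, qI]
  have IIV : ∀ v : V, I • (I • v) = -v := by
    intro v; rw [smul_smul, Complex.I_mul_I, neg_one_smul]
  have Bq_Il : ∀ x y : V, Bq (I•x) y = -Bq x (I•y) := by
    intro x y
    have h := Bq_II x (I•y)
    rw [IIV, Bq_negr] at h
    linear_combination (norm := abel1) -h
  have Bq_selfI : ∀ x : V, Bq x (I•x) = 0 := by
    intro x
    have h := Bq_Il x x
    rw [Bq_symm (I • x) x] at h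
    apply aux_half_cancel (G := G)
    rw [add_zero]
    linear_combination (norm := abel1) h
  have qvcont : Continuous qv := by
    simp only [hqvdef]
    exact (hfc.comp φ.continuous).add ((hfc.comp φ.continuous).comp continuous_neg)
  have Bq_real : ∀ (y : V) (r : ℝ) (x : V), Bq (r • x) y = r • Bq x y := by
    intro y r x
    have hcont : Continuous (fun x => Bq x y) := by
      simp only [hBqdef]
      exact ((qvcont.comp (continuous_id.add continuous_const)).sub qvcont).sub continuous_const
    exact map_real_smul (AddMonoidHom.mk' (fun x => Bq x y) (fun a b => Bq_addl a b y)) hcont r x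
  have Bq_realC : ∀ (r : ℝ) (x y : V), Bq ((r:ℂ) • x) y = (r:ℂ) • Bq x y := by
    intro r x y
    rw [Complex.coe_smul, Complex.coe_smul]
    exact Bq_real y r x
  set sv : V → V → G := fun a c => Bq a c + I • Bq a (I•c) with hsvdef
  have sv_addl : ∀ a b c : V, sv (a+b) c = sv a c + sv b c := by
    intro a b c; simp only [hsvdef]
    rw [Bq_addl, Bq_addl, smul_add]; abel
  have sv_addr : ∀ a b c : V, sv a (b+c) = sv a b + sv a c := by
    intro a b c; simp only [hsvdef]
    rw [smul_add I b c, Bq_addr, Bq_addr, smul_add]; abel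
  have sv_Il : ∀ a c : V, sv (I•a) c = I • sv a c := by
    intro a c; simp only [hsvdef]
    rw [Bq_Il, Bq_II, smul_add, smul_smul, Complex.I_mul_I, neg_one_smul]
    abel
  have sv_Ir : ∀ a c : V, sv a (I•c) = -(I • sv a c) := by
    intro a c; simp only [hsvdef]
    rw [IIV, Bq_negr, smul_neg, smul_add, smul_smul, Complex.I_mul_I, neg_one_smul]
    abel
  have sv_realC_l : ∀ (r:ℝ) (a c : V), sv ((r:ℂ)•a) c = (r:ℂ) • sv a c := by
    intro r a c; simp only [hsvdef]
    rw [Bq_realC, Bq_realC, smul_add, smul_smul, smul_smul, mul_comm I (r:ℂ)]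
  have sv_realC_r : ∀ (r:ℝ) (a c : V), sv a ((r:ℂ)•c) = (r:ℂ) • sv a c := by
    intro r a c; simp only [hsvdef]
    have h1 : Bq a ((r:ℂ)•c) = (r:ℂ) • Bq a c := by
      rw [Bq_symm, Bq_realC, Bq_symm]
    have h2 : Bq a (I•((r:ℂ)•c)) = (r:ℂ) • Bq a (I•c) := by
      rw [smul_smul, mul_comm, ← smul_smul, Bq_symm, Bq_realC, Bq_symm]
    rw [h1, h2, smul_add, smul_smul, smul_smul, mul_comm I (r:ℂ)]
  have sv_smull : ∀ (c:ℂ) (a b : V), sv (c • a) b = c • sv a b := by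
    intro c a b
    rw [aux_decomp c a, sv_addl, sv_realC_l, sv_realC_l, sv_Il, aux_decomp c (sv a b)]
  have sv_smulr : ∀ (c:ℂ) (a b : V), sv a (c • b) = (starRingEnd ℂ c) • sv a b := by
    intro c a b
    rw [aux_decomp c b, sv_addr, sv_realC_r, sv_realC_r, sv_Ir,
        aux_decomp (starRingEnd ℂ c) (sv a b)]
    simp only [Complex.conj_re, Complex.conj_im, Complex.ofReal_neg, neg_smul, smul_neg]
    try abel
  have sv_sum : ∀ a c : V, sv a c + sv c a = Bq a c + Bq a c := by
    intro a c; simp only [hsvdef]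
    rw [Bq_symm c a, Bq_symm c (I•a), Bq_Il a c, smul_neg]
    abel
  have sv_self : ∀ a : V, sv a a = qv a + qv a := by
    intro a; simp only [hsvdef]
    rw [Bq_selfI, smul_zero, add_zero]
    have h := qpar a a
    rw [sub_self, qv0, add_zero] at h
    simp only [hBqdef]
    linear_combination (norm := abel1) h
  set QW : W → G := fun w => f w + f (-w) with hQWdef
  set BW : W → W → G := fun w w' => QW (w + w') - QW w - QW w' with hBWdef
  set T : W → G := fun w => (2:ℂ)⁻¹ • (f w - f (-w)) with hTdef
  set S : W → W → G := fun w w' => (4:ℂ)⁻¹ • (BW w w' + I • BW w (I • w')) with hSdef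
  have hQWt : ∀ a b : V, QW (φ a + ψ b) = qv a + qv b := by
    intro a b
    simp only [hQWdef]
    rw [show -(φ a + ψ b) = φ (-a) + ψ (-b) by rw [map_neg, map_neg]; abel]
    rw [key1, key1]
    have hb : k b + k (-b) = qv b := by
      have h := kv_eq_qv b; simp only [hkvdef] at h; exact h
    have ha : g a + g (-a) = qv a := by simp only [hqvdef]
    linear_combination (norm := abel1) ha + hb
  have hBWt : ∀ a b c d : V, BW (φ a + ψ b) (φ c + ψ d) = Bq a c + Bq b d := by
    intro a b c d
    simp only [hBWdef]
    rw [show (φ a + ψ b) + (φ c + ψ d) = φ (a+c) + ψ (b+d) by rw [map_add, map_add]; abel]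
    rw [hQWt, hQWt, hQWt]
    simp only [hBqdef]
    abel
  have BW_perp : ∀ x y : W, perp x y → BW x y = 0 := by
    intro x y hp
    simp only [hBWdef, hQWdef]
    rw [hf x y hp, neg_add, hf (-x) (-y) (hperpneg x y hp)]
    abel
  have hSt : ∀ a b c d : V, S (φ a + ψ b) (φ c + ψ d) = (4:ℂ)⁻¹ • (sv a c + sv b d) := by
    intro a b c d
    simp only [hSdef]
    rw [show I • (φ c + ψ d) = φ (I•c) + ψ (I•d) by rw [smul_add, map_smul, map_smul]]
    rw [hBWt, hBWt]
    simp only [hsvdef]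
    congr 1
    rw [smul_add]
    abel
  have hTt : ∀ a b : V, T (φ a + ψ b) = (2:ℂ)⁻¹ • (gOdd a + E b) := by
    intro a b
    simp only [hTdef]
    rw [show -(φ a + ψ b) = φ (-a) + ψ (-b) by rw [map_neg, map_neg]; abel]
    rw [key1, key1]
    simp only [hgodef, hEdef]
    congr 1
    abel
  refine ⟨T, S, ?_, ?_, ?_, ?_, ?_, ?_, ?_, ?_, ?_, ?_⟩
  · simp only [hTdef]
    exact ((hfc.sub (hfc.comp continuous_neg)).const_smul _)
  · simp only [hSdef, hBWdef, hQWdef]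
    fun_prop
  · intro x hx y hy
    obtain ⟨a, b, rfl⟩ := hmem x hx
    obtain ⟨c, d, rfl⟩ := hmem y hy
    rw [show (φ a + ψ b) + (φ c + ψ d) = φ (a+c) + ψ (b+d) by rw [map_add, map_add]; abel]
    rw [hTt, hTt, hTt, goadd, Eadd, ← smul_add]
    congr 1
    abel
  · intro x hx y hy z hz
    obtain ⟨a, b, rfl⟩ := hmem x hx
    obtain ⟨c, d, rfl⟩ := hmem y hy
    obtain ⟨u, v, rfl⟩ := hmem z hz
    rw [show (φ a + ψ b) + (φ c + ψ d) = φ (a+c) + ψ (b+d) by rw [map_add, map_add]; abel]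
    rw [hSt, hSt, hSt, sv_addl, sv_addl, ← smul_add]
    congr 1
    abel
  · intro x hx y hy z hz
    obtain ⟨a, b, rfl⟩ := hmem x hx
    obtain ⟨c, d, rfl⟩ := hmem y hy
    obtain ⟨u, v, rfl⟩ := hmem z hz
    rw [show (φ c + ψ d) + (φ u + ψ v) = φ (c+u) + ψ (d+v) by rw [map_add, map_add]; abel]
    rw [hSt, hSt, hSt, sv_addr, sv_addr, ← smul_add]
    congr 1
    abel
  · intro c x hx y hy
    obtain ⟨a, b, rfl⟩ := hmem x hx
    obtain ⟨u, v, rfl⟩ := hmem y hy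
    rw [show c • (φ a + ψ b) = φ (c•a) + ψ (c•b) by rw [smul_add, map_smul, map_smul]]
    rw [hSt, hSt, sv_smull, sv_smull, ← smul_add, smul_smul, smul_smul,
        mul_comm (4:ℂ)⁻¹ c]
  · intro c x hx y hy
    obtain ⟨a, b, rfl⟩ := hmem x hx
    obtain ⟨u, v, rfl⟩ := hmem y hy
    rw [show c • (φ u + ψ v) = φ (c•u) + ψ (c•v) by rw [smul_add, map_smul, map_smul]]
    rw [hSt, hSt, sv_smulr, sv_smulr, ← smul_add, smul_smul, smul_smul,
        mul_comm (4:ℂ)⁻¹ (starRingEnd ℂ c)]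
  · intro x hx y hy hp
    have hBW0 := BW_perp x y hp
    obtain ⟨a, b, rfl⟩ := hmem x hx
    obtain ⟨c, d, rfl⟩ := hmem y hy
    rw [hBWt] at hBW0
    rw [hSt, hSt, ← smul_add]
    have h1 := sv_sum a c
    have h2 := sv_sum b d
    have h3 : (sv a c + sv b d) + (sv c a + sv d b) = 0 := by
      linear_combination (norm := abel1) h1 + h2 + hBW0 + hBW0
    rw [h3, smul_zero]
  · intro x hx
    obtain ⟨a, b, rfl⟩ := hmem x hx
    rw [key1, hTt, hSt, sv_self, sv_self]
    have hb : qv b = k b + k (-b) := by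
      have h := (kv_eq_qv b).symm; simp only [hkvdef] at h; exact h
    rw [hb]
    simp only [hgodef, hEdef, hqvdef]
    match_scalars <;> norm_num
  · intro himp x hx y hy hp
    have h1 := BW_perp x y hp
    have h2 := BW_perp x (I • y) (himp x y hp)
    simp only [hSdef]
    rw [h1, h2, smul_zero, add_zero, smul_zero]
end

section
/- Let W be a Hilbert C*-module over a C*-algebra A, let V be a submodule of W, and let φ : V → W be a mapping satisfying ⟨φ(x), φ(y)⟩ = ⟨x, y⟩ for all x, y ∈ V and φ(V) ⊆ V^⊥, where V^⊥ = {x ∈ W : ⟨x, y⟩ = 0 for all y ∈ V}. Let W₀ = V + φ(V). If G is a uniquely 2-divisible abelian group and f : W → G is an orthogonally additive mapping, then there exist mappings T : W → G and B : W × W → G such that T is additive on W₀, B is symmetric, biadditive and orthogonality preserving on W₀ × W₀, and f(x) = T(x) + B(x, x) for all x ∈ W₀. -/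
/-- A Hilbert C*-module structure on `W` over a C*-algebra `A`: a right `A`-action `smul`
and an `A`-valued inner product `inner` satisfying the usual axioms, whose induced norm
`‖⟨x,x⟩‖ ^ (1/2)` coincides with the (complete) norm of `W`.  Positivity `⟨x,x⟩ ≥ 0` is
encoded through its C*-algebraic characterization `∃ b, ⟨x,x⟩ = b* ⬝ b`. -/
structure HilbertModule (A : Type*) (W : Type*)
    [NonUnitalNormedRing A] [StarRing A] [CStarRing A] [NormedSpace ℂ A]
    [IsScalarTower ℂ A A] [SMulCommClass ℂ A A] [StarModule ℂ A] [CompleteSpace A]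
    [NormedAddCommGroup W] [NormedSpace ℂ W] [CompleteSpace W] : Type _ where
  smul : W → A → W
  inner : W → W → A
  add_smul' : ∀ x y a, smul (x + y) a = smul x a + smul y a
  smul_add' : ∀ x a b, smul x (a + b) = smul x a + smul x b
  smul_assoc' : ∀ x a b, smul (smul x a) b = smul x (a * b)
  smul_complex₁ : ∀ (c : ℂ) x a, smul (c • x) a = c • smul x a
  smul_complex₂ : ∀ (c : ℂ) x a, smul x (c • a) = c • smul x a
  inner_add_left : ∀ x y z, inner (x + y) z = inner x z + inner y z
  inner_add_right : ∀ x y z, inner x (y + z) = inner x y + inner x z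
  inner_smul_right : ∀ x y a, inner x (smul y a) = inner x y * a
  inner_smul_complex : ∀ (c : ℂ) x y, inner x (c • y) = c • inner x y
  star_inner : ∀ x y, star (inner x y) = inner y x
  inner_self_nonneg : ∀ x, ∃ a, inner x x = star a * a
  inner_self_eq_zero : ∀ x, inner x x = 0 ↔ x = 0
  norm_sq_eq : ∀ x, ‖x‖ ^ 2 = ‖inner x x‖

/-- Theorem 3.1 (i).
Let `W` be a Hilbert C*-module over a C*-algebra `A`, `V` a submodule of `W`, and
`φ : V → W` a morphism (`⟨φx, φy⟩ = ⟨x, y⟩`) with `φ(V) ⊆ V^⊥`.  Let `W₀ = V + φ(V)`.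
If `G` is a uniquely 2-divisible abelian group and `f : W → G` is orthogonally additive,
then `f(x) = T(x) + B(x,x)` on `W₀` with `T` additive on `W₀` and `B` symmetric,
biadditive and orthogonality preserving on `W₀ × W₀`. -/
theorem orthogonally_additive_module_decomposition
    {A W : Type*}
    [NonUnitalNormedRing A] [StarRing A] [CStarRing A] [NormedSpace ℂ A]
    [IsScalarTower ℂ A A] [SMulCommClass ℂ A A] [StarModule ℂ A] [CompleteSpace A]
    [NormedAddCommGroup W] [NormedSpace ℂ W] [CompleteSpace W]
    (M : HilbertModule A W)
    {G : Type*} [AddCommGroup G]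
    (hG2 : ∀ g : G, ∃! h : G, h + h = g)
    (V : Set W)
    (hV0 : (0 : W) ∈ V)
    (hVadd : ∀ x ∈ V, ∀ y ∈ V, x + y ∈ V)
    (hVsmulC : ∀ (c : ℂ), ∀ x ∈ V, c • x ∈ V)
    (hVsmulA : ∀ x ∈ V, ∀ a : A, M.smul x a ∈ V)
    (φ : W → W)
    (hφmor : ∀ x ∈ V, ∀ y ∈ V, M.inner (φ x) (φ y) = M.inner x y)
    (hφperp : ∀ x ∈ V, ∀ y ∈ V, M.inner (φ x) y = 0)
    (W₀ : Set W) (hW₀ : W₀ = {w : W | ∃ u ∈ V, ∃ v ∈ V, u + φ v = w})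
    (f : W → G)
    (hf : ∀ x y : W, M.inner x y = 0 → f (x + y) = f x + f y) :
    ∃ (T : W → G) (B : W → W → G),
      (∀ x ∈ W₀, ∀ y ∈ W₀, T (x + y) = T x + T y) ∧
      (∀ x ∈ W₀, ∀ y ∈ W₀, B x y = B y x) ∧
      (∀ x ∈ W₀, ∀ y ∈ W₀, ∀ z ∈ W₀, B (x + y) z = B x z + B y z) ∧
      (∀ x ∈ W₀, ∀ y ∈ W₀, ∀ z ∈ W₀, B x (y + z) = B x y + B x z) ∧
      (∀ x ∈ W₀, ∀ y ∈ W₀, M.inner x y = 0 → B x y = 0) ∧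
      (∀ x ∈ W₀, f x = T x + B x x) := by
  classical
  -- halving machinery
  obtain ⟨half, hhalf, huniqhalf⟩ :
      ∃ h : G → G, (∀ a, h a + h a = a) ∧ (∀ a b, b + b = a → b = h a) :=
    ⟨fun a => (hG2 a).choose, fun a => (hG2 a).choose_spec.1,
      fun a b hb => (hG2 a).choose_spec.2 b hb⟩
  have canc2 : ∀ a b : G, a + a = b + b → a = b := by
    intro a b h
    exact (huniqhalf (b + b) a h).trans (huniqhalf (b + b) b rfl).symm
  have halfadd : ∀ a b : G, half (a + b) = half a + half b := by
    intro a b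
    refine (huniqhalf (a + b) (half a + half b) ?_).symm
    calc half a + half b + (half a + half b)
        = (half a + half a) + (half b + half b) := by abel
      _ = a + b := by rw [hhalf, hhalf]
  have half0 : half (0 : G) = 0 := by
    have h := (huniqhalf (0 : G) 0 (add_zero 0)).symm
    exact h
  -- V closure
  have hVneg : ∀ x ∈ V, -x ∈ V := by
    intro x hx
    have := hVsmulC (-1) x hx
    rwa [neg_one_smul] at this
  have hVsub : ∀ x ∈ V, ∀ y ∈ V, x - y ∈ V := by
    intro x hx y hy
    rw [sub_eq_add_neg]
    exact hVadd x hx (-y) (hVneg y hy)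
  -- inner lemmas
  have innerNegR : ∀ x y : W, M.inner x (-y) = -M.inner x y := by
    intro x y
    rw [show (-y : W) = (-1 : ℂ) • y from (neg_one_smul ℂ y).symm, M.inner_smul_complex,
      neg_one_smul]
  have innerNegL : ∀ x y : W, M.inner (-x) y = -M.inner x y := by
    intro x y
    rw [← M.star_inner, innerNegR, star_neg, M.star_inner]
  have innerZeroR : ∀ x : W, M.inner x 0 = 0 := by
    intro x
    rw [show (0 : W) = (0 : ℂ) • (0 : W) from (zero_smul ℂ (0 : W)).symm,
      M.inner_smul_complex, zero_smul]
  -- φ lemmas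
  have φ0 : φ 0 = 0 := by
    have h : M.inner (φ 0) (φ 0) = 0 := by rw [hφmor 0 hV0 0 hV0, innerZeroR]
    exact (M.inner_self_eq_zero (φ 0)).mp h
  have φadd : ∀ x ∈ V, ∀ y ∈ V, φ (x + y) = φ x + φ y := by
    intro x hx y hy
    have hxy := hVadd x hx y hy
    have h : M.inner (φ (x + y) - (φ x + φ y)) (φ (x + y) - (φ x + φ y)) = 0 := by
      simp only [sub_eq_add_neg, neg_add, M.inner_add_left, M.inner_add_right,
        innerNegL, innerNegR]
      simp only [hφmor (x + y) hxy (x + y) hxy, hφmor (x + y) hxy x hx,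
        hφmor (x + y) hxy y hy, hφmor x hx (x + y) hxy, hφmor x hx x hx,
        hφmor x hx y hy, hφmor y hy (x + y) hxy, hφmor y hy x hx, hφmor y hy y hy]
      simp only [M.inner_add_left, M.inner_add_right]
      abel
    exact sub_eq_zero.mp ((M.inner_self_eq_zero _).mp h)
  have φneg : ∀ x ∈ V, φ (-x) = -φ x := by
    intro x hx
    have h := φadd x hx (-x) (hVneg x hx)
    rw [add_neg_cancel, φ0] at h
    exact eq_neg_of_add_eq_zero_right h.symm
  have φsub : ∀ x ∈ V, ∀ y ∈ V, φ (x - y) = φ x - φ y := by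
    intro x hx y hy
    rw [sub_eq_add_neg, φadd x hx (-y) (hVneg y hy), φneg y hy, ← sub_eq_add_neg]
  have horth : ∀ u ∈ V, ∀ v ∈ V, M.inner u (φ v) = 0 := by
    intro u hu v hv
    rw [← M.star_inner, hφperp v hv u hu, star_zero]
  have innerWsplit : ∀ u ∈ V, ∀ v ∈ V, ∀ u' ∈ V, ∀ v' ∈ V,
      M.inner (u + φ v) (u' + φ v') = M.inner u u' + M.inner v v' := by
    intro u hu v hv u' hu' v' hv'
    rw [M.inner_add_left, M.inner_add_right, M.inner_add_right,
      hφmor v hv v' hv', hφperp v hv u' hu', horth u hu v' hv']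
    abel
    -- f at 0
  have f0 : f 0 = 0 := by
    have h := hf 0 0 (innerZeroR 0)
    rw [add_zero] at h
    have h2 : f 0 + 0 = f 0 + f 0 := by rw [add_zero]; exact h
    exact (add_left_cancel h2).symm
  -- auxiliary functions
  obtain ⟨g, hg⟩ : ∃ g : W → G, ∀ a, g a = f (φ a) := ⟨_, fun _ => rfl⟩
  obtain ⟨k, hk⟩ : ∃ k : W → G, ∀ a, k a = g a + g (-a) := ⟨_, fun _ => rfl⟩
  obtain ⟨m, hm⟩ : ∃ m : W → G, ∀ a, m a = f a + f (-a) := ⟨_, fun _ => rfl⟩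
  have g0 : g 0 = 0 := by rw [hg, φ0, f0]
  have k0 : k 0 = 0 := by rw [hk, neg_zero, g0, add_zero]
  have m0 : m 0 = 0 := by rw [hm, neg_zero, f0, add_zero]
  have keven : ∀ a : W, k (-a) = k a := by
    intro a; rw [hk, hk, neg_neg, add_comm]
  have hsplit : ∀ u ∈ V, ∀ v ∈ V, f (u + φ v) = f u + g v := by
    intro u hu v hv
    rw [hg]
    exact hf u (φ v) (horth u hu v hv)
  -- the two fundamental orthogonality identities
  have star1 : ∀ x ∈ V, ∀ y ∈ V,
      f (x + y) + g (x - y) = f x + g x + (f y + g (-y)) := by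
    intro x hx y hy
    have hne : -y ∈ V := hVneg y hy
    have h0 : M.inner (x + φ x) (y + φ (-y)) = 0 := by
      rw [innerWsplit x hx x hx y hy (-y) hne, innerNegR, add_neg_cancel]
    have key := hf _ _ h0
    rw [show (x + φ x) + (y + φ (-y)) = (x + y) + (φ x + φ (-y)) from by abel,
      ← φadd x hx (-y) hne, ← sub_eq_add_neg,
      hf (x + y) (φ (x - y)) (horth (x + y) (hVadd x hx y hy) (x - y) (hVsub x hx y hy)),
      hf x (φ x) (horth x hx x hx),
      hf y (φ (-y)) (horth y hy (-y) hne), ← hg, ← hg, ← hg] at key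
    exact key
  have star2 : ∀ x ∈ V, ∀ y ∈ V,
      f (x - y) + g (x + y) = f x + g x + (f (-y) + g y) := by
    intro x hx y hy
    have hne : -y ∈ V := hVneg y hy
    have h0 : M.inner (x + φ x) (-y + φ y) = 0 := by
      rw [innerWsplit x hx x hx (-y) hne y hy, innerNegR, neg_add_cancel]
    have key := hf _ _ h0
    rw [show (x + φ x) + (-y + φ y) = (x - y) + (φ x + φ y) from by abel,
      ← φadd x hx y hy,
      hf (x - y) (φ (x + y)) (horth (x - y) (hVsub x hx y hy) (x + y) (hVadd x hx y hy)),
      hf x (φ x) (horth x hx x hx),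
      hf (-y) (φ y) (horth (-y) hne y hy), ← hg, ← hg, ← hg] at key
    exact key
  -- quadratic defect functions
  obtain ⟨Cc, hCc⟩ : ∃ Cc : W → W → G, ∀ a b, Cc a b = f (a + b) - f a - f b :=
    ⟨_, fun _ _ => rfl⟩
  obtain ⟨Dd, hDd⟩ : ∃ Dd : W → W → G, ∀ a b, Dd a b = g (a + b) - g a - g b :=
    ⟨_, fun _ _ => rfl⟩
  have CcSym : ∀ a b : W, Cc a b = Cc b a := by
    intro a b; rw [hCc, hCc, add_comm a b]; abel
  have hCk : ∀ x ∈ V, ∀ y ∈ V, Cc x y + Cc x y = k x + k y - k (x - y) := by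
    intro x hx y hy
    have s1 := star1 x hx y hy
    have s2 := star1 y hy x hx
    rw [add_comm y x, show y - x = -(x - y) from (neg_sub x y).symm] at s2
    simp only [hCc, hk]
    refine add_right_cancel (b := f x + f x + (f y + f y) + (g (x - y) + g (-(x - y)))) ?_
    calc (f (x + y) - f x - f y) + (f (x + y) - f x - f y)
          + (f x + f x + (f y + f y) + (g (x - y) + g (-(x - y))))
        = (f (x + y) + g (x - y)) + (f (x + y) + g (-(x - y))) := by abel
      _ = (f x + g x + (f y + g (-y))) + (f y + g y + (f x + g (-x))) := by rw [s1, s2]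
      _ = (g x + g (-x)) + (g y + g (-y)) - (g (x - y) + g (-(x - y)))
          + (f x + f x + (f y + f y) + (g (x - y) + g (-(x - y)))) := by abel
  have hDm : ∀ x ∈ V, ∀ y ∈ V, Dd x y + Dd x y = m x + m y - m (x - y) := by
    intro x hx y hy
    have t1 := star2 x hx y hy
    have t2 := star2 y hy x hx
    rw [add_comm y x, show y - x = -(x - y) from (neg_sub x y).symm] at t2
    simp only [hDd, hm]
    refine add_right_cancel (b := g x + g x + (g y + g y) + (f (x - y) + f (-(x - y)))) ?_
    calc (g (x + y) - g x - g y) + (g (x + y) - g x - g y)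
          + (g x + g x + (g y + g y) + (f (x - y) + f (-(x - y))))
        = (f (x - y) + g (x + y)) + (f (-(x - y)) + g (x + y)) := by abel
      _ = (f x + g x + (f (-y) + g y)) + (f y + g y + (f (-x) + g x)) := by rw [t1, t2]
      _ = (f x + f (-x)) + (f y + f (-y)) - (f (x - y) + f (-(x - y)))
          + (g x + g x + (g y + g y) + (f (x - y) + f (-(x - y)))) := by abel
    -- P1 : k(x+y) + m(x-y) = kx + ky + (mx + my)
  have L3 : ∀ x ∈ V, ∀ y ∈ V, k (x + y) + m (x - y) = k x + k y + (m x + m y) := by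
    intro x hx y hy
    have hnx : -x ∈ V := hVneg x hx
    have hny : -y ∈ V := hVneg y hy
    have t1 := star2 x hx y hy
    have t2 := star2 y hy x hx
    rw [add_comm y x, show y - x = -(x - y) from (neg_sub x y).symm] at t2
    have t3 := star2 (-x) hnx (-y) hny
    rw [show -x - -y = -(x - y) from by abel, show -x + -y = -(x + y) from by abel,
      neg_neg] at t3
    have t4 := star2 (-y) hny (-x) hnx
    rw [show -y - -x = x - y from by abel, show -y + -x = -(x + y) from by abel,
      neg_neg] at t4
    refine canc2 _ _ ?_
    simp only [hk, hm]
    calc (g (x + y) + g (-(x + y)) + (f (x - y) + f (-(x - y))))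
          + (g (x + y) + g (-(x + y)) + (f (x - y) + f (-(x - y))))
        = (f (x - y) + g (x + y)) + ((f (-(x - y)) + g (x + y))
            + ((f (-(x - y)) + g (-(x + y))) + (f (x - y) + g (-(x + y))))) := by abel
      _ = (f x + g x + (f (-y) + g y)) + ((f y + g y + (f (-x) + g x))
            + ((f (-x) + g (-x) + (f y + g (-y))) + (f (-y) + g (-y) + (f x + g (-x))))) := by
          rw [t1, t2, t3, t4]
      _ = (g x + g (-x) + (g y + g (-y)) + (f x + f (-x) + (f y + f (-y))))
          + (g x + g (-x) + (g y + g (-y)) + (f x + f (-x) + (f y + f (-y)))) := by abel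
  -- P2 : m(x+y) + k(x-y) = mx + my + (kx + ky)
  have L4 : ∀ x ∈ V, ∀ y ∈ V, m (x + y) + k (x - y) = m x + m y + (k x + k y) := by
    intro x hx y hy
    have hnx : -x ∈ V := hVneg x hx
    have hny : -y ∈ V := hVneg y hy
    have s1 := star1 x hx y hy
    have s2 := star1 y hy x hx
    rw [add_comm y x, show y - x = -(x - y) from (neg_sub x y).symm] at s2
    have s3 := star1 (-x) hnx (-y) hny
    rw [show -x - -y = -(x - y) from by abel, show -x + -y = -(x + y) from by abel,
      neg_neg] at s3
    have s4 := star1 (-y) hny (-x) hnx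
    rw [show -y - -x = x - y from by abel, show -y + -x = -(x + y) from by abel,
      neg_neg] at s4
    refine canc2 _ _ ?_
    simp only [hk, hm]
    calc (f (x + y) + f (-(x + y)) + (g (x - y) + g (-(x - y))))
          + (f (x + y) + f (-(x + y)) + (g (x - y) + g (-(x - y))))
        = (f (x + y) + g (x - y)) + ((f (x + y) + g (-(x - y)))
            + ((f (-(x + y)) + g (-(x - y))) + (f (-(x + y)) + g (x - y)))) := by abel
      _ = (f x + g x + (f y + g (-y))) + ((f y + g y + (f x + g (-x)))
            + ((f (-x) + g (-x) + (f (-y) + g y)) + (f (-y) + g (-y) + (f (-x) + g x)))) := by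
          rw [s1, s2, s3, s4]
      _ = (f x + f (-x) + (f y + f (-y)) + (g x + g (-x) + (g y + g (-y))))
          + (f x + f (-x) + (f y + f (-y)) + (g x + g (-x) + (g y + g (-y)))) := by abel
  -- k = m on V
  have L5 : ∀ a ∈ V, k a = m a := by
    intro a ha
    have hxV : (2⁻¹ : ℂ) • a ∈ V := hVsmulC _ a ha
    have hxx : (2⁻¹ : ℂ) • a + (2⁻¹ : ℂ) • a = a := by rw [← add_smul]; norm_num
    have h3 := L3 _ hxV _ hxV
    rw [hxx, sub_self, m0, add_zero] at h3
    have h4 := L4 _ hxV _ hxV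
    rw [hxx, sub_self, k0, add_zero] at h4
    rw [h3, h4]; abel
  -- k is quadratic
  have L6 : ∀ x ∈ V, ∀ y ∈ V, k (x + y) + k (x - y) = k x + k y + (k x + k y) := by
    intro x hx y hy
    have h := L3 x hx y hy
    rw [← L5 (x - y) (hVsub x hx y hy), ← L5 x hx, ← L5 y hy] at h
    exact h
  -- cube identity (biadditivity of the polar form)
  have L7 : ∀ x ∈ V, ∀ y ∈ V, ∀ z ∈ V,
      k (x + y + z) + (k x + k y + k z) = k (x + y) + k (x + z) + k (y + z) := by
    intro x hx y hy z hz
    have hxy := hVadd x hx y hy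
    have hxz := hVadd x hx z hz
    have hyz := hVsub y hy z hz
    have e1 := L6 (x + y) hxy z hz
    have e2 := L6 (x + z) hxz y hy
    rw [show x + z + y = x + y + z from by abel] at e2
    have e3 := L6 x hx (y - z) hyz
    rw [show x + (y - z) = x + y - z from by abel,
      show x - (y - z) = x + z - y from by abel] at e3
    have e4 := L6 y hy z hz
    refine canc2 _ _ ?_
    refine add_right_cancel
      (b := k (x + y - z) + k (x + z - y) + (k (y - z) + k (y - z))
        + (k y + k y + (k z + k z))) ?_
    calc (k (x + y + z) + (k x + k y + k z)) + (k (x + y + z) + (k x + k y + k z))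
          + (k (x + y - z) + k (x + z - y) + (k (y - z) + k (y - z))
            + (k y + k y + (k z + k z)))
        = (k (x + y + z) + k (x + y - z)) + ((k (x + y + z) + k (x + z - y))
            + ((k x + k (y - z) + (k x + k (y - z)))
              + ((k y + k z + (k y + k z)) + (k y + k z + (k y + k z))))) := by abel
      _ = (k (x + y) + k z + (k (x + y) + k z)) + ((k (x + z) + k y + (k (x + z) + k y))
            + ((k (x + y - z) + k (x + z - y))
              + ((k (y + z) + k (y - z)) + (k (y + z) + k (y - z))))) := by
          rw [e1, e2, ← e3, ← e4]
      _ = (k (x + y) + k (x + z) + k (y + z)) + (k (x + y) + k (x + z) + k (y + z))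
          + (k (x + y - z) + k (x + z - y) + (k (y - z) + k (y - z))
            + (k y + k y + (k z + k z))) := by abel
    -- biadditivity of Cc on V
  have CcAdd : ∀ x ∈ V, ∀ y ∈ V, ∀ z ∈ V, Cc (x + y) z = Cc x z + Cc y z := by
    intro x hx y hy z hz
    have hxy := hVadd x hx y hy
    have hz' := hVneg z hz
    have L7' := L7 x hx y hy (-z) hz'
    rw [keven, ← sub_eq_add_neg, ← sub_eq_add_neg, ← sub_eq_add_neg] at L7'
    -- L7' : k (x+y-z) + (k x + k y + k z) = k (x+y) + k (x-z) + k (y-z)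
    have a1 := hCk (x + y) hxy z hz
    have a2 := hCk x hx z hz
    have a3 := hCk y hy z hz
    have hmid : k (x + y) + k z - k (x + y - z)
        = (k x + k z - k (x - z)) + (k y + k z - k (y - z)) := by
      refine add_right_cancel (b := k (x + y - z) + (k (x - z) + k (y - z))) ?_
      calc k (x + y) + k z - k (x + y - z) + (k (x + y - z) + (k (x - z) + k (y - z)))
          = k (x + y) + k (x - z) + k (y - z) + k z := by abel
        _ = (k (x + y - z) + (k x + k y + k z)) + k z := by rw [← L7']
        _ = (k x + k z - k (x - z)) + (k y + k z - k (y - z))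
            + (k (x + y - z) + (k (x - z) + k (y - z))) := by abel
    have dbl : Cc (x + y) z + Cc (x + y) z = (Cc x z + Cc x z) + (Cc y z + Cc y z) := by
      rw [a1, a2, a3]; exact hmid
    refine canc2 _ _ ?_
    calc Cc (x + y) z + Cc (x + y) z = (Cc x z + Cc x z) + (Cc y z + Cc y z) := dbl
      _ = (Cc x z + Cc y z) + (Cc x z + Cc y z) := by abel
  -- Dd = Cc on V
  have CcDd : ∀ x ∈ V, ∀ y ∈ V, Dd x y = Cc x y := by
    intro x hx y hy
    have h1 := hCk x hx y hy
    have h2 := hDm x hx y hy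
    rw [← L5 x hx, ← L5 y hy, ← L5 (x - y) (hVsub x hx y hy)] at h2
    exact canc2 _ _ (h2.trans h1.symm)
  -- membership and representation machinery for W₀
  have hmemW₀ : ∀ u ∈ V, ∀ v ∈ V, u + φ v ∈ W₀ := by
    intro u hu v hv
    rw [hW₀]
    exact ⟨u, hu, v, hv, rfl⟩
  have huniq : ∀ u ∈ V, ∀ v ∈ V, ∀ u' ∈ V, ∀ v' ∈ V,
      u + φ v = u' + φ v' → u = u' ∧ v = v' := by
    intro u hu v hv u' hu' v' hv' h
    have h' : (u + φ v) - (u' + φ v') = 0 := by rw [h, sub_self]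
    have hw2 : u - u' = φ (v' - v) := by
      rw [φsub v' hv' v hv, ← sub_eq_zero]
      calc u - u' - (φ v' - φ v) = (u + φ v) - (u' + φ v') := by abel
        _ = 0 := h'
    have h0 := hφperp (v' - v) (hVsub v' hv' v hv) (u - u') (hVsub u hu u' hu')
    rw [← hw2] at h0
    have hu0 : u - u' = 0 := (M.inner_self_eq_zero _).mp h0
    have hφv : φ (v' - v) = 0 := by rw [← hw2, hu0]
    have hv0 : M.inner (v' - v) (v' - v) = 0 := by
      rw [← hφmor (v' - v) (hVsub v' hv' v hv) (v' - v) (hVsub v' hv' v hv), hφv, innerZeroR]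
    exact ⟨sub_eq_zero.mp hu0, (sub_eq_zero.mp ((M.inner_self_eq_zero _).mp hv0)).symm⟩
  have hrepex : ∀ w : W, ∃ p : W × W, w ∈ W₀ → p.1 ∈ V ∧ p.2 ∈ V ∧ p.1 + φ p.2 = w := by
    intro w
    by_cases h : w ∈ W₀
    · rw [hW₀] at h
      obtain ⟨u, hu, v, hv, huv⟩ := h
      exact ⟨(u, v), fun _ => ⟨hu, hv, huv⟩⟩
    · exact ⟨(0, 0), fun h' => absurd h' h⟩
  choose rep hrep using hrepex
  have hW₀add : ∀ x ∈ W₀, ∀ y ∈ W₀, x + y ∈ W₀ := by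
    intro x hx y hy
    obtain ⟨hu, hv, hx3⟩ := hrep x hx
    obtain ⟨hu', hv', hy3⟩ := hrep y hy
    have hxy : x + y = ((rep x).1 + (rep y).1) + φ ((rep x).2 + (rep y).2) := by
      rw [φadd _ hv _ hv']
      conv_lhs => rw [← hx3, ← hy3]
      abel
    rw [hxy]
    exact hmemW₀ _ (hVadd _ hu _ hu') _ (hVadd _ hv _ hv')
  have repadd : ∀ x ∈ W₀, ∀ y ∈ W₀,
      (rep (x + y)).1 = (rep x).1 + (rep y).1 ∧ (rep (x + y)).2 = (rep x).2 + (rep y).2 := by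
    intro x hx y hy
    obtain ⟨hu, hv, hx3⟩ := hrep x hx
    obtain ⟨hu', hv', hy3⟩ := hrep y hy
    have hxy : x + y = ((rep x).1 + (rep y).1) + φ ((rep x).2 + (rep y).2) := by
      rw [φadd _ hv _ hv']
      conv_lhs => rw [← hx3, ← hy3]
      abel
    obtain ⟨hU, hV2, hS⟩ := hrep (x + y) (hW₀add x hx y hy)
    exact huniq _ hU _ hV2 _ (hVadd _ hu _ hu') _ (hVadd _ hv _ hv') (by rw [hS, hxy])
  have hfW : ∀ x ∈ W₀, f x = f (rep x).1 + g (rep x).2 := by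
    intro x hx
    obtain ⟨hu, hv, hx3⟩ := hrep x hx
    conv_lhs => rw [← hx3]
    exact hsplit _ hu _ hv
  have hfaddW : ∀ x ∈ W₀, ∀ y ∈ W₀,
      f (x + y) = f x + f y + (Cc (rep x).1 (rep y).1 + Cc (rep x).2 (rep y).2) := by
    intro x hx y hy
    obtain ⟨hu, hv, hx3⟩ := hrep x hx
    obtain ⟨hu', hv', hy3⟩ := hrep y hy
    obtain ⟨h1, h2⟩ := repadd x hx y hy
    rw [hfW (x + y) (hW₀add x hx y hy), h1, h2, hfW x hx, hfW y hy,
      ← CcDd _ hv _ hv']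
    simp only [hCc, hDd]
    abel
    -- the final maps
  obtain ⟨B, hB⟩ : ∃ B : W → W → G,
      ∀ x y, B x y = half (Cc (rep x).1 (rep y).1 + Cc (rep x).2 (rep y).2) :=
    ⟨_, fun _ _ => rfl⟩
  obtain ⟨T, hT⟩ : ∃ T : W → G, ∀ x, T x = f x - B x x := ⟨_, fun _ => rfl⟩
  have Bsym : ∀ a b : W, B a b = B b a := by
    intro a b
    rw [hB, hB, CcSym (rep a).1 (rep b).1, CcSym (rep a).2 (rep b).2]
  have Bleft : ∀ x ∈ W₀, ∀ y ∈ W₀, ∀ z ∈ W₀, B (x + y) z = B x z + B y z := by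
    intro x hx y hy z hz
    obtain ⟨hu, hv, _⟩ := hrep x hx
    obtain ⟨hu', hv', _⟩ := hrep y hy
    obtain ⟨hu'', hv'', _⟩ := hrep z hz
    obtain ⟨h1, h2⟩ := repadd x hx y hy
    rw [hB, hB, hB, h1, h2, CcAdd _ hu _ hu' _ hu'', CcAdd _ hv _ hv' _ hv'',
      ← halfadd]
    refine congrArg half ?_
    abel
  refine ⟨T, B, ?_, ?_, ?_, ?_, ?_, ?_⟩
  · -- T additive on W₀
    intro x hx y hy
    obtain ⟨hu, hv, _⟩ := hrep x hx
    obtain ⟨hu', hv', _⟩ := hrep y hy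
    obtain ⟨h1, h2⟩ := repadd x hx y hy
    have euu : Cc ((rep x).1 + (rep y).1) ((rep x).1 + (rep y).1)
        = Cc (rep x).1 (rep x).1 + Cc (rep x).1 (rep y).1
          + (Cc (rep x).1 (rep y).1 + Cc (rep y).1 (rep y).1) := by
      rw [CcAdd _ hu _ hu' _ (hVadd _ hu _ hu'),
        CcSym (rep x).1 ((rep x).1 + (rep y).1), CcSym (rep y).1 ((rep x).1 + (rep y).1),
        CcAdd _ hu _ hu' _ hu, CcAdd _ hu _ hu' _ hu',
        CcSym (rep y).1 (rep x).1]
    have evv : Cc ((rep x).2 + (rep y).2) ((rep x).2 + (rep y).2)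
        = Cc (rep x).2 (rep x).2 + Cc (rep x).2 (rep y).2
          + (Cc (rep x).2 (rep y).2 + Cc (rep y).2 (rep y).2) := by
      rw [CcAdd _ hv _ hv' _ (hVadd _ hv _ hv'),
        CcSym (rep x).2 ((rep x).2 + (rep y).2), CcSym (rep y).2 ((rep x).2 + (rep y).2),
        CcAdd _ hv _ hv' _ hv, CcAdd _ hv _ hv' _ hv',
        CcSym (rep y).2 (rep x).2]
    have hBxy : B (x + y) (x + y)
        = B x x + B y y + (Cc (rep x).1 (rep y).1 + Cc (rep x).2 (rep y).2) := by
      rw [hB, hB, hB, h1, h2]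
      refine (huniqhalf _ _ ?_).symm
      calc half (Cc (rep x).1 (rep x).1 + Cc (rep x).2 (rep x).2)
            + half (Cc (rep y).1 (rep y).1 + Cc (rep y).2 (rep y).2)
            + (Cc (rep x).1 (rep y).1 + Cc (rep x).2 (rep y).2)
            + (half (Cc (rep x).1 (rep x).1 + Cc (rep x).2 (rep x).2)
              + half (Cc (rep y).1 (rep y).1 + Cc (rep y).2 (rep y).2)
              + (Cc (rep x).1 (rep y).1 + Cc (rep x).2 (rep y).2))
          = (half (Cc (rep x).1 (rep x).1 + Cc (rep x).2 (rep x).2)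
              + half (Cc (rep x).1 (rep x).1 + Cc (rep x).2 (rep x).2))
            + ((half (Cc (rep y).1 (rep y).1 + Cc (rep y).2 (rep y).2)
              + half (Cc (rep y).1 (rep y).1 + Cc (rep y).2 (rep y).2))
            + ((Cc (rep x).1 (rep y).1 + Cc (rep x).2 (rep y).2)
              + (Cc (rep x).1 (rep y).1 + Cc (rep x).2 (rep y).2))) := by abel
        _ = (Cc (rep x).1 (rep x).1 + Cc (rep x).2 (rep x).2)
            + ((Cc (rep y).1 (rep y).1 + Cc (rep y).2 (rep y).2)
            + ((Cc (rep x).1 (rep y).1 + Cc (rep x).2 (rep y).2)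
              + (Cc (rep x).1 (rep y).1 + Cc (rep x).2 (rep y).2))) := by
            rw [hhalf, hhalf]
        _ = Cc ((rep x).1 + (rep y).1) ((rep x).1 + (rep y).1)
            + Cc ((rep x).2 + (rep y).2) ((rep x).2 + (rep y).2) := by
            rw [euu, evv]; abel
    rw [hT, hT, hT, hfaddW x hx y hy, hBxy]
    abel
  · -- symmetry
    intro x _ y _
    exact Bsym x y
  · -- additivity in the first variable
    exact Bleft
  · -- additivity in the second variable
    intro x hx y hy z hz
    rw [Bsym x (y + z), Bleft y hy z hz x hx, Bsym y x, Bsym z x]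
  · -- orthogonality preserving
    intro x hx y hy hxy0
    have h := hf x y hxy0
    have h2 := hfaddW x hx y hy
    have h3 : f x + f y + (Cc (rep x).1 (rep y).1 + Cc (rep x).2 (rep y).2)
        = f x + f y + 0 := by
      rw [add_zero]
      exact h2.symm.trans h
    have h4 := add_left_cancel h3
    rw [hB, h4, half0]
  · -- decomposition
    intro x _
    rw [hT]
    abel
end

section
/- Let W be a Hilbert C*-module over a C*-algebra A, let V be a submodule of W, and let φ : V → W be a mapping satisfying ⟨φ(x), φ(y)⟩ = ⟨x, y⟩ for all x, y ∈ V and φ(V) ⊆ V^⊥, where V^⊥ = {x ∈ W : ⟨x, y⟩ = 0 for all y ∈ V}. Let W₀ = V + φ(V). If G is a complex normed space and f : W → G is a continuous orthogonally additive mapping, then there exist continuous mappings T : W → G and S : W × W → G such that T is additive on W₀, S is sesquilinear and orthogonality preserving on W₀ × W₀, and f(x) = T(x) + S(x, x) for all x ∈ W₀. -/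
open Complex (I)

namespace Function

variable {α G : Type*} [InvolutiveNeg α] [AddCommGroup G] [Module ℂ G]

noncomputable def oddPart (f : α → G) (x : α) : G := (2⁻¹ : ℂ) • (f x - f (-x))

noncomputable def evenPart (f : α → G) (x : α) : G := (2⁻¹ : ℂ) • (f x + f (-x))

lemma oddPart_odd (f : α → G) : f.oddPart.Odd := fun x => by
  simp only [oddPart, neg_neg]
  module

lemma evenPart_even (f : α → G) : f.evenPart.Even := fun x => by
  rw [evenPart, evenPart, neg_neg, add_comm]

lemma oddPart_add_evenPart (f : α → G) (x : α) : f.oddPart x + f.evenPart x = f x := by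
  simp only [oddPart, evenPart]
  module

lemma _root_.Continuous.oddPart [TopologicalSpace α] [ContinuousNeg α] [TopologicalSpace G]
    [IsTopologicalAddGroup G] [ContinuousConstSMul ℂ G] {f : α → G} (hf : Continuous f) :
    Continuous f.oddPart := by
  unfold Function.oddPart; fun_prop

lemma _root_.Continuous.evenPart [TopologicalSpace α] [ContinuousNeg α] [TopologicalSpace G]
    [IsTopologicalAddGroup G] [ContinuousConstSMul ℂ G] {f : α → G} (hf : Continuous f) :
    Continuous f.evenPart := by
  unfold Function.evenPart; fun_prop

end Function

section Polarization

variable {E G : Type*} [AddCommGroup E] [AddCommGroup G]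

def polarRe (Q : E → G) (x y : E) : G := Q (x + y) - Q (x - y)

lemma polarRe_neg_right (Q : E → G) (x y : E) : polarRe Q x (-y) = -polarRe Q x y := by
  rw [polarRe, polarRe, sub_neg_eq_add, ← sub_eq_add_neg, neg_sub]

variable [Module ℂ E]

structure IsComplexQuadraticOn (p : Submodule ℂ E) (Q : E → G) : Prop where
  parallelogram : ∀ x ∈ p, ∀ y ∈ p, Q (x + y) + Q (x - y) = 2 • Q x + 2 • Q y
  map_I_smul : ∀ x ∈ p, Q (I • x) = Q x

lemma I_smul_I_smul (x : E) : I • I • x = -x := by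
  rw [smul_smul, Complex.I_mul_I, neg_one_smul]

namespace IsComplexQuadraticOn

variable {p : Submodule ℂ E} {Q : E → G} (hQ : IsComplexQuadraticOn p Q)
include hQ

lemma map_neg {x : E} (hx : x ∈ p) : Q (-x) = Q x := by
  rw [← I_smul_I_smul, hQ.map_I_smul _ (p.smul_mem I hx), hQ.map_I_smul x hx]

lemma polarRe_comm {x y : E} (hx : x ∈ p) (hy : y ∈ p) : polarRe Q x y = polarRe Q y x := by
  rw [polarRe, polarRe, add_comm, ← neg_sub y x, hQ.map_neg (p.sub_mem hy hx)]

lemma polarRe_zero_left {y : E} (hy : y ∈ p) : polarRe Q 0 y = 0 := by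
  rw [polarRe, zero_add, zero_sub, hQ.map_neg hy, sub_self]

lemma polarRe_add_polarRe {x y z : E} (hx : x ∈ p) (hy : y ∈ p) (hz : z ∈ p) :
    polarRe Q x z + polarRe Q y z = 2 • polarRe Q ((2⁻¹ : ℂ) • (x + y)) z := by
  have hm := p.smul_mem (2⁻¹ : ℂ) (p.add_mem hx hy)
  have hd := p.smul_mem (2⁻¹ : ℂ) (p.sub_mem hx hy)
  have h₁ := hQ.parallelogram _ (p.add_mem hm hz) _ hd
  have h₂ := hQ.parallelogram _ (p.sub_mem hm hz) _ hd
  rw [show (2⁻¹ : ℂ) • (x + y) + z + (2⁻¹ : ℂ) • (x - y) = x + z by module,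
    show (2⁻¹ : ℂ) • (x + y) + z - (2⁻¹ : ℂ) • (x - y) = y + z by module] at h₁
  rw [show (2⁻¹ : ℂ) • (x + y) - z + (2⁻¹ : ℂ) • (x - y) = x - z by module,
    show (2⁻¹ : ℂ) • (x + y) - z - (2⁻¹ : ℂ) • (x - y) = y - z by module] at h₂
  simp only [polarRe]
  linear_combination (norm := module) h₁ - h₂

lemma polarRe_add_left {x y z : E} (hx : x ∈ p) (hy : y ∈ p) (hz : z ∈ p) :
    polarRe Q (x + y) z = polarRe Q x z + polarRe Q y z := by
  have h := hQ.polarRe_add_polarRe (p.add_mem hx hy) p.zero_mem hz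
  rw [add_zero, hQ.polarRe_zero_left hz, add_zero] at h
  rw [hQ.polarRe_add_polarRe hx hy hz, h]

lemma polarRe_add_right {x y z : E} (hx : x ∈ p) (hy : y ∈ p) (hz : z ∈ p) :
    polarRe Q x (y + z) = polarRe Q x y + polarRe Q x z := by
  rw [hQ.polarRe_comm hx (p.add_mem hy hz), hQ.polarRe_add_left hy hz hx,
    hQ.polarRe_comm hy hx, hQ.polarRe_comm hz hx]

lemma polarRe_I_smul_left {x y : E} (hx : x ∈ p) (hy : y ∈ p) :
    polarRe Q (I • x) y = -polarRe Q x (I • y) := by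
  have hIy := p.smul_mem I hy
  rw [polarRe, polarRe, ← hQ.map_I_smul _ (p.sub_mem hx hIy),
    ← hQ.map_I_smul _ (p.add_mem hx hIy), smul_sub, smul_add, I_smul_I_smul, sub_neg_eq_add,
    ← sub_eq_add_neg, neg_sub]

end IsComplexQuadraticOn

variable [Module ℂ G]

noncomputable def polarization (Q : E → G) (x y : E) : G :=
  (4⁻¹ : ℂ) • (polarRe Q x y + I • polarRe Q x (I • y))

lemma polarization_I_smul_right (Q : E → G) (x y : E) :
    polarization Q x (I • y) = -(I • polarization Q x y) := by
  rw [polarization, polarization, I_smul_I_smul, polarRe_neg_right]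
  linear_combination (norm := module) Complex.I_mul_I • ((4⁻¹ : ℂ) • polarRe Q x (I • y))

namespace IsComplexQuadraticOn

variable {p : Submodule ℂ E} {Q : E → G} (hQ : IsComplexQuadraticOn p Q)
include hQ

lemma map_zero : Q 0 = 0 := by
  have h := hQ.parallelogram 0 p.zero_mem 0 p.zero_mem
  simp only [add_zero, sub_zero] at h
  linear_combination (norm := module) (-(2 : ℂ)⁻¹) • h

lemma polarization_add_left {x y z : E} (hx : x ∈ p) (hy : y ∈ p) (hz : z ∈ p) :
    polarization Q (x + y) z = polarization Q x z + polarization Q y z := by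
  rw [polarization, polarization, polarization, hQ.polarRe_add_left hx hy hz,
    hQ.polarRe_add_left hx hy (p.smul_mem I hz)]
  module

lemma polarization_add_right {x y z : E} (hx : x ∈ p) (hy : y ∈ p) (hz : z ∈ p) :
    polarization Q x (y + z) = polarization Q x y + polarization Q x z := by
  rw [polarization, polarization, polarization, hQ.polarRe_add_right hx hy hz, smul_add I y z,
    hQ.polarRe_add_right hx (p.smul_mem I hy) (p.smul_mem I hz)]
  module

lemma polarization_I_smul_left {x y : E} (hx : x ∈ p) (hy : y ∈ p) :
    polarization Q (I • x) y = I • polarization Q x y := by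
  rw [polarization, polarization, hQ.polarRe_I_smul_left hx hy,
    hQ.polarRe_I_smul_left hx (p.smul_mem I hy), I_smul_I_smul, polarRe_neg_right]
  linear_combination (norm := module)
    Complex.I_mul_I • (-(4⁻¹ : ℂ) • polarRe Q x (I • y))

lemma polarization_self {x : E} (hx : x ∈ p) : polarization Q x x = Q x := by
  have h := hQ.parallelogram x hx x hx
  have hIx : x - I • x = I • -(x + I • x) := by rw [smul_neg, smul_add, I_smul_I_smul]; abel
  rw [sub_self, hQ.map_zero, add_zero] at h
  rw [polarization, polarRe, polarRe, sub_self, hQ.map_zero, hIx,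
    hQ.map_I_smul _ (p.neg_mem (p.add_mem hx (p.smul_mem I hx))),
    hQ.map_neg (p.add_mem hx (p.smul_mem I hx)), h]
  module

end IsComplexQuadraticOn

end Polarization

lemma Continuous.polarization {E G : Type*} [AddCommGroup E] [Module ℂ E] [TopologicalSpace E]
    [IsTopologicalAddGroup E] [ContinuousConstSMul ℂ E] [AddCommGroup G] [Module ℂ G]
    [TopologicalSpace G] [IsTopologicalAddGroup G] [ContinuousConstSMul ℂ G] {Q : E → G}
    (hQ : Continuous Q) : Continuous fun q : E × E => polarization Q q.1 q.2 := by
  unfold _root_.polarization polarRe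
  fun_prop

section ComplexHomogeneity

variable {E G : Type*} [NormedAddCommGroup E] [NormedSpace ℂ E]
  [NormedAddCommGroup G] [NormedSpace ℂ G] {p : Submodule ℂ E} {g : E → G}

lemma map_smul_eq_re_smul_add_im_smul (hg : Continuous g)
    (hadd : ∀ x ∈ p, ∀ y ∈ p, g (x + y) = g x + g y) (c : ℂ) {x : E} (hx : x ∈ p) :
    g (c • x) = c.re • g x + c.im • g (I • x) := by
  have hreal (t : ℝ) {y : E} (hy : y ∈ p) : g ((t : ℂ) • y) = t • g y := by
    simpa [Complex.coe_smul] using map_real_smul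
      (AddMonoidHom.mk' (fun z : p => g z) fun a b => hadd a a.2 b b.2)
      (hg.comp continuous_subtype_val) t ⟨y, hy⟩
  have hIx := p.smul_mem I hx
  rw [← hreal _ hx, ← hreal _ hIx, ← hadd _ (p.smul_mem _ hx) _ (p.smul_mem _ hIx), smul_smul,
    ← add_smul, Complex.re_add_im]

lemma map_smul_of_map_I_smul (hg : Continuous g)
    (hadd : ∀ x ∈ p, ∀ y ∈ p, g (x + y) = g x + g y)
    (hI : ∀ x ∈ p, g (I • x) = I • g x) (c : ℂ) {x : E} (hx : x ∈ p) :
    g (c • x) = c • g x := by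
  rw [map_smul_eq_re_smul_add_im_smul hg hadd c hx, hI x hx, ← Complex.coe_smul,
    ← Complex.coe_smul]
  linear_combination (norm := module) (Complex.re_add_im c) • g x

lemma map_smul_of_map_I_smul_eq_neg (hg : Continuous g)
    (hadd : ∀ x ∈ p, ∀ y ∈ p, g (x + y) = g x + g y)
    (hI : ∀ x ∈ p, g (I • x) = -(I • g x)) (c : ℂ) {x : E} (hx : x ∈ p) :
    g (c • x) = starRingEnd ℂ c • g x := by
  rw [map_smul_eq_re_smul_add_im_smul hg hadd c hx, hI x hx, ← Complex.coe_smul,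
    ← Complex.coe_smul, ← Complex.re_add_im (starRingEnd ℂ c), Complex.conj_re,
    Complex.conj_im]
  module

namespace IsComplexQuadraticOn

variable {Q : E → G} (hQ : IsComplexQuadraticOn p Q) (hQc : Continuous Q)
include hQ hQc

lemma polarization_smul_left (c : ℂ) {x y : E} (hx : x ∈ p) (hy : y ∈ p) :
    polarization Q (c • x) y = c • polarization Q x y :=
  map_smul_of_map_I_smul (g := fun x => polarization Q x y)
    (hQc.polarization.comp (.prodMk continuous_id continuous_const))
    (fun _ hx _ hx' => hQ.polarization_add_left hx hx' hy)
    (fun _ hx => hQ.polarization_I_smul_left hx hy) c hx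

lemma polarization_smul_right (c : ℂ) {x y : E} (hx : x ∈ p) (hy : y ∈ p) :
    polarization Q x (c • y) = starRingEnd ℂ c • polarization Q x y :=
  map_smul_of_map_I_smul_eq_neg (g := polarization Q x)
    (hQc.polarization.comp (.prodMk continuous_const continuous_id))
    (fun _ hy _ hy' => hQ.polarization_add_right hx hy hy')
    (fun y _ => polarization_I_smul_right Q x y) c hy

end IsComplexQuadraticOn

end ComplexHomogeneity

lemma Submodule.exists_eq_add_of_mem_sup_range {R E : Type*} [Semiring R] [AddCommMonoid E]
    [Module R E] {V : Submodule R E} {ψ : V →ₗ[R] E} {x : E}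
    (hx : x ∈ V ⊔ LinearMap.range ψ) : ∃ a b : V, (a : E) + ψ b = x := by
  obtain ⟨y, hy, _, ⟨b, rfl⟩, rfl⟩ := Submodule.mem_sup.mp hx
  exact ⟨⟨y, hy⟩, b, rfl⟩

namespace HilbertModule

variable {A W : Type*}
    [NonUnitalNormedRing A] [StarRing A] [CStarRing A] [NormedSpace ℂ A]
    [IsScalarTower ℂ A A] [SMulCommClass ℂ A A] [StarModule ℂ A] [CompleteSpace A]
    [NormedAddCommGroup W] [NormedSpace ℂ W] [CompleteSpace W]
    (M : HilbertModule A W)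

lemma inner_neg_left (x y : W) : M.inner (-x) y = -M.inner x y :=
  (AddMonoidHom.mk' (M.inner · y) fun a b => M.inner_add_left a b y).map_neg x

lemma inner_neg_right (x y : W) : M.inner x (-y) = -M.inner x y :=
  (AddMonoidHom.mk' (M.inner x) (M.inner_add_right x)).map_neg y

lemma inner_sub_left (x y z : W) : M.inner (x - y) z = M.inner x z - M.inner y z :=
  (AddMonoidHom.mk' (M.inner · z) fun a b => M.inner_add_left a b z).map_sub x y

lemma inner_sub_right (x y z : W) : M.inner x (y - z) = M.inner x y - M.inner x z :=
  (AddMonoidHom.mk' (M.inner x) (M.inner_add_right x)).map_sub y z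

lemma inner_smul_left (c : ℂ) (x y : W) :
    M.inner (c • x) y = starRingEnd ℂ c • M.inner x y := by
  rw [← M.star_inner y, M.inner_smul_complex, star_smul, M.star_inner, Complex.star_def]

lemma eq_of_inner_sub_eq_zero {x y : W} (hx : M.inner (x - y) x = 0)
    (hy : M.inner (x - y) y = 0) : x = y :=
  sub_eq_zero.mp <| (M.inner_self_eq_zero _).mp <| by rw [M.inner_sub_right, hx, hy, sub_zero]

section InnerPreserving

variable {M} {V : Submodule ℂ W} {φ : W → W}
  (hφ : ∀ x ∈ V, ∀ y ∈ V, M.inner (φ x) (φ y) = M.inner x y)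
include hφ

lemma map_add_of_inner_map_map {u v : W} (hu : u ∈ V) (hv : v ∈ V) :
    φ (u + v) = φ u + φ v := by
  have key : ∀ w ∈ V, M.inner (φ (u + v) - (φ u + φ v)) (φ w) = 0 := fun w hw => by
    rw [M.inner_sub_left, M.inner_add_left, hφ _ (V.add_mem hu hv) _ hw, hφ _ hu _ hw,
      hφ _ hv _ hw, M.inner_add_left, sub_self]
  exact M.eq_of_inner_sub_eq_zero (key _ (V.add_mem hu hv))
    (by rw [M.inner_add_right, key _ hu, key _ hv, add_zero])

lemma map_smul_of_inner_map_map (c : ℂ) {v : W} (hv : v ∈ V) : φ (c • v) = c • φ v := by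
  have key : ∀ w ∈ V, M.inner (φ (c • v) - c • φ v) (φ w) = 0 := fun w hw => by
    rw [M.inner_sub_left, M.inner_smul_left, hφ _ (V.smul_mem c hv) _ hw, hφ _ hv _ hw,
      M.inner_smul_left, sub_self]
  exact M.eq_of_inner_sub_eq_zero (key _ (V.smul_mem c hv))
    (by rw [M.inner_smul_complex, key _ hv, smul_zero])

def innerPreservingLinearMap : V →ₗ[ℂ] W where
  toFun v := φ v
  map_add' u v := map_add_of_inner_map_map hφ u.2 v.2
  map_smul' c v := map_smul_of_inner_map_map hφ c v.2

end InnerPreserving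

structure IsIsometryIntoPerp {V : Submodule ℂ W} (ψ : V →ₗ[ℂ] W) : Prop where
  inner_map_map : ∀ x y : V, M.inner (ψ x) (ψ y) = M.inner x y
  inner_map_left : ∀ x y : V, M.inner (ψ x) y = 0

variable {M}

lemma IsIsometryIntoPerp.inner_map_right {V : Submodule ℂ W} {ψ : V →ₗ[ℂ] W}
    (hψ : M.IsIsometryIntoPerp ψ) (x y : V) : M.inner x (ψ y) = 0 := by
  rw [← M.star_inner, hψ.inner_map_left, star_zero]

variable (M) in
def IsOrthogonallyAdditive {G : Type*} [Add G] (h : W → G) : Prop :=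
  ∀ x y, M.inner x y = 0 → h (x + y) = h x + h y

namespace IsOrthogonallyAdditive

variable {G : Type*} [AddCommGroup G] {h : W → G} (hh : M.IsOrthogonallyAdditive h)
  {V : Submodule ℂ W} {ψ : V →ₗ[ℂ] W}
include hh

lemma comp_neg : M.IsOrthogonallyAdditive (fun x => h (-x)) := fun x y hxy => by
  dsimp only
  rw [neg_add, hh _ _ (by rw [M.inner_neg_left, M.inner_neg_right, neg_neg, hxy])]

lemma apply_add_map (hψ : M.IsIsometryIntoPerp ψ) (a b : V) : h (a + ψ b) = h a + h (ψ b) :=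
  hh _ _ (hψ.inner_map_right a b)

lemma apply_add_add_apply_map_add (hψ : M.IsIsometryIntoPerp ψ) {a b a' b' : V}
    (horth : M.inner (a : W) b + M.inner (a' : W) b' = 0) :
    h ((a : W) + b) + h (ψ (a' + b')) = h a + h (ψ a') + (h b + h (ψ b')) := by
  have hsum : M.inner (a + ψ a') (b + ψ b') = 0 := by
    rw [M.inner_add_left, M.inner_add_right, M.inner_add_right, hψ.inner_map_right,
      hψ.inner_map_left, hψ.inner_map_map, add_zero, zero_add, horth]
  rw [← Submodule.coe_add, ← hh.apply_add_map hψ, ← hh.apply_add_map hψ,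
    ← hh.apply_add_map hψ, ← hh _ _ hsum, map_add, Submodule.coe_add]
  abel_nf

lemma apply_add_add_apply_map_sub (hψ : M.IsIsometryIntoPerp ψ) (a b : V) :
    h ((a : W) + b) + h (ψ (a - b)) = h a + h (ψ a) + (h b + h (ψ (-b))) := by
  have horth : M.inner (a : W) b + M.inner (a : W) ↑(-b) = 0 := by
    rw [Submodule.coe_neg, M.inner_neg_right, add_neg_cancel]
  simpa [sub_eq_add_neg] using hh.apply_add_add_apply_map_add hψ horth

lemma apply_map_of_even (hψ : M.IsIsometryIntoPerp ψ) (heven : h.Even) (a : V) :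
    h (ψ a) = h a := by
  have e₁ := hh.apply_add_add_apply_map_sub hψ ((2⁻¹ : ℂ) • a) ((2⁻¹ : ℂ) • a)
  have e₂ := hh.apply_add_add_apply_map_sub hψ ((2⁻¹ : ℂ) • a) (-((2⁻¹ : ℂ) • a))
  have hhalf : (2⁻¹ : ℂ) • a + (2⁻¹ : ℂ) • a = a := by module
  rw [map_neg, heven, ← Submodule.coe_add, hhalf, sub_self, map_zero] at e₁
  rw [neg_neg, sub_neg_eq_add, hhalf, Submodule.coe_neg, heven, ← sub_eq_add_neg,
    sub_self] at e₂
  linear_combination (norm := module) e₂ - e₁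

lemma parallelogram_of_even (hψ : M.IsIsometryIntoPerp ψ) (heven : h.Even) (a b : V) :
    h ((a : W) + b) + h (a - b) = 2 • h a + 2 • h b := by
  have e := hh.apply_add_add_apply_map_sub hψ a b
  rw [map_neg, heven, hh.apply_map_of_even hψ heven, hh.apply_map_of_even hψ heven,
    hh.apply_map_of_even hψ heven, Submodule.coe_sub] at e
  rw [e, two_nsmul, two_nsmul]

variable [Module ℂ G]

lemma oddPart : M.IsOrthogonallyAdditive h.oddPart := fun x y hxy => by
  simp only [Function.oddPart, hh x y hxy, hh.comp_neg x y hxy]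
  module

lemma evenPart : M.IsOrthogonallyAdditive h.evenPart := fun x y hxy => by
  simp only [Function.evenPart, hh x y hxy, hh.comp_neg x y hxy]
  module

lemma polarization_eq_zero (heven : h.Even) {x y : W} (hxy : M.inner x y = 0) :
    polarization h x y = 0 := by
  have hIy : M.inner x (I • y) = 0 := by rw [M.inner_smul_complex, hxy, smul_zero]
  simp only [polarization, polarRe, sub_eq_add_neg, hh _ _ hxy, hh _ _ hIy,
    hh _ _ (by rwa [M.inner_neg_right, neg_eq_zero] : M.inner x (-y) = 0),
    hh _ _ (by rwa [M.inner_neg_right, neg_eq_zero] : M.inner x (-(I • y)) = 0), heven.eq]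
  module

lemma apply_add_of_odd (hψ : M.IsIsometryIntoPerp ψ) (hodd : h.Odd) (a b : V) :
    h ((a : W) + b) = h a + h b := by
  have e₁ := hh.apply_add_add_apply_map_sub hψ a b
  have e₂ := hh.apply_add_add_apply_map_sub hψ b a
  rw [map_neg, hodd] at e₁ e₂
  rw [← neg_sub, map_neg, hodd, add_comm (b : W)] at e₂
  linear_combination (norm := module) (2⁻¹ : ℂ) • (e₁ + e₂)

lemma apply_map_sub_of_odd (hψ : M.IsIsometryIntoPerp ψ) (hodd : h.Odd) (a b : V) :
    h (ψ (a - b)) = h (ψ a) - h (ψ b) := by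
  have e₁ := hh.apply_add_add_apply_map_sub hψ a b
  have e₂ := hh.apply_add_add_apply_map_sub hψ b a
  rw [map_neg, hodd] at e₁ e₂
  rw [← neg_sub, map_neg, hodd, add_comm (b : W)] at e₂
  linear_combination (norm := module) (2⁻¹ : ℂ) • (e₁ - e₂)

lemma apply_map_add_of_odd (hψ : M.IsIsometryIntoPerp ψ) (hodd : h.Odd) (a b : V) :
    h (ψ (a + b)) = h (ψ a) + h (ψ b) := by
  simpa [map_neg, hodd.eq] using hh.apply_map_sub_of_odd hψ hodd a (-b)

lemma apply_I_smul_of_even (hψ : M.IsIsometryIntoPerp ψ) (heven : h.Even) (a : V) :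
    h (I • (a : W)) = h a := by
  have horth : M.inner (a : W) a + M.inner ((I • a : V) : W) ↑(-(I • a)) = 0 := by
    rw [Submodule.coe_neg, M.inner_neg_right, Submodule.coe_smul, M.inner_smul_left,
      M.inner_smul_complex, smul_smul, Complex.conj_I, neg_mul, Complex.I_mul_I, neg_neg,
      one_smul, add_neg_cancel]
  have e := hh.apply_add_add_apply_map_add hψ horth
  have hpar := hh.parallelogram_of_even hψ heven a a
  rw [add_neg_cancel, map_zero, map_neg, heven, hh.apply_map_of_even hψ heven,
    Submodule.coe_smul] at e
  rw [sub_self, ← map_zero ψ, hh.apply_map_of_even hψ heven, Submodule.coe_zero] at hpar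
  linear_combination (norm := module) (2⁻¹ : ℂ) • (hpar - e)

lemma apply_add_of_odd_of_mem_sup (hψ : M.IsIsometryIntoPerp ψ) (hodd : h.Odd) {x y : W}
    (hx : x ∈ V ⊔ LinearMap.range ψ) (hy : y ∈ V ⊔ LinearMap.range ψ) :
    h (x + y) = h x + h y := by
  obtain ⟨a, b, rfl⟩ := Submodule.exists_eq_add_of_mem_sup_range hx
  obtain ⟨a', b', rfl⟩ := Submodule.exists_eq_add_of_mem_sup_range hy
  have hsum : (a : W) + ψ b + (a' + ψ b') = ↑(a + a') + ψ (b + b') := by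
    rw [map_add, Submodule.coe_add]; abel
  rw [hsum, hh.apply_add_map hψ, hh.apply_add_map hψ, hh.apply_add_map hψ, Submodule.coe_add,
    hh.apply_add_of_odd hψ hodd, hh.apply_map_add_of_odd hψ hodd]
  abel

lemma isComplexQuadraticOn_of_even (hψ : M.IsIsometryIntoPerp ψ) (heven : h.Even) :
    IsComplexQuadraticOn (V ⊔ LinearMap.range ψ) h where
  parallelogram x hx y hy := by
    obtain ⟨a, b, rfl⟩ := Submodule.exists_eq_add_of_mem_sup_range hx
    obtain ⟨a', b', rfl⟩ := Submodule.exists_eq_add_of_mem_sup_range hy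
    have hadd : (a : W) + ψ b + (a' + ψ b') = ↑(a + a') + ψ (b + b') := by
      rw [map_add, Submodule.coe_add]; abel
    have hsub : (a : W) + ψ b - (a' + ψ b') = ↑(a - a') + ψ (b - b') := by
      rw [map_sub, Submodule.coe_sub]; abel
    simp only [hadd, hsub, hh.apply_add_map hψ, hh.apply_map_of_even hψ heven]
    simp only [Submodule.coe_add, Submodule.coe_sub]
    linear_combination (norm := module)
      hh.parallelogram_of_even hψ heven a a' + hh.parallelogram_of_even hψ heven b b'
  map_I_smul x hx := by
    obtain ⟨a, b, rfl⟩ := Submodule.exists_eq_add_of_mem_sup_range hx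
    rw [smul_add, ← Submodule.coe_smul, ← ψ.map_smul, hh.apply_add_map hψ,
      hh.apply_add_map hψ, hh.apply_map_of_even hψ heven, hh.apply_map_of_even hψ heven,
      Submodule.coe_smul, Submodule.coe_smul, hh.apply_I_smul_of_even hψ heven,
      hh.apply_I_smul_of_even hψ heven]

end IsOrthogonallyAdditive

end HilbertModule

theorem continuous_orthogonally_additive_module_decomposition_general
    {A W : Type*}
    [NonUnitalNormedRing A] [StarRing A] [CStarRing A] [NormedSpace ℂ A]
    [IsScalarTower ℂ A A] [SMulCommClass ℂ A A] [StarModule ℂ A] [CompleteSpace A]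
    [NormedAddCommGroup W] [NormedSpace ℂ W] [CompleteSpace W]
    (M : HilbertModule A W)
    {G : Type*} [NormedAddCommGroup G] [NormedSpace ℂ G]
    (V : Set W)
    (hV0 : (0 : W) ∈ V)
    (hVadd : ∀ x ∈ V, ∀ y ∈ V, x + y ∈ V)
    (hVsmulC : ∀ (c : ℂ), ∀ x ∈ V, c • x ∈ V)
    (φ : W → W)
    (hφmor : ∀ x ∈ V, ∀ y ∈ V, M.inner (φ x) (φ y) = M.inner x y)
    (hφperp : ∀ x ∈ V, ∀ y ∈ V, M.inner (φ x) y = 0)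
    (W₀ : Set W) (hW₀ : W₀ = {w : W | ∃ u ∈ V, ∃ v ∈ V, u + φ v = w})
    (f : W → G) (hfc : Continuous f)
    (hf : ∀ x y : W, M.inner x y = 0 → f (x + y) = f x + f y) :
    ∃ (T : W → G) (S : W → W → G),
      Continuous T ∧ Continuous (fun p : W × W => S p.1 p.2) ∧
      (∀ x ∈ W₀, ∀ y ∈ W₀, T (x + y) = T x + T y) ∧
      (∀ x ∈ W₀, ∀ y ∈ W₀, ∀ z ∈ W₀, S (x + y) z = S x z + S y z) ∧
      (∀ x ∈ W₀, ∀ y ∈ W₀, ∀ z ∈ W₀, S x (y + z) = S x y + S x z) ∧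
      (∀ (c : ℂ), ∀ x ∈ W₀, ∀ y ∈ W₀, S (c • x) y = c • S x y) ∧
      (∀ (c : ℂ), ∀ x ∈ W₀, ∀ y ∈ W₀, S x (c • y) = (starRingEnd ℂ) c • S x y) ∧
      (∀ x ∈ W₀, ∀ y ∈ W₀, M.inner x y = 0 → S x y = 0) ∧
      (∀ x ∈ W₀, f x = T x + S x x) := by
  let V' : Submodule ℂ W :=
    { carrier := V, add_mem' := fun ha hb => hVadd _ ha _ hb, zero_mem' := hV0,
      smul_mem' := fun c x hx => hVsmulC c x hx }
  let ψ : V' →ₗ[ℂ] W := HilbertModule.innerPreservingLinearMap (V := V') (φ := φ) hφmor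
  have hψ : M.IsIsometryIntoPerp ψ :=
    ⟨fun x y => hφmor x x.2 y y.2, fun x y => hφperp x x.2 y y.2⟩
  obtain rfl : W₀ = V' ⊔ LinearMap.range ψ := by
    ext w
    rw [hW₀, SetLike.mem_coe, Submodule.mem_sup]
    simp [ψ, V', HilbertModule.innerPreservingLinearMap]
  have hf' : M.IsOrthogonallyAdditive f := hf
  have hQ := hf'.evenPart.isComplexQuadraticOn_of_even hψ f.evenPart_even
  have hQc : Continuous f.evenPart := hfc.evenPart
  refine ⟨f.oddPart, polarization f.evenPart, hfc.oddPart, hQc.polarization,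
    fun x hx y hy => hf'.oddPart.apply_add_of_odd_of_mem_sup hψ f.oddPart_odd hx hy,
    fun x hx y hy z hz => hQ.polarization_add_left hx hy hz,
    fun x hx y hy z hz => hQ.polarization_add_right hx hy hz,
    fun c x hx y hy => hQ.polarization_smul_left hQc c hx hy,
    fun c x hx y hy => hQ.polarization_smul_right hQc c hx hy,
    fun x _ y _ hxy => hf'.evenPart.polarization_eq_zero f.evenPart_even hxy,
    fun x hx => ?_⟩
  rw [hQ.polarization_self hx, f.oddPart_add_evenPart]

/-- Theorem 3.1 (ii).
Let `W` be a Hilbert C*-module over a C*-algebra `A`, `V` a submodule of `W`, and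
`φ : V → W` a morphism (`⟨φx, φy⟩ = ⟨x, y⟩`) with `φ(V) ⊆ V^⊥`.  Let `W₀ = V + φ(V)`.
If `G` is a complex normed space and `f : W → G` is a continuous orthogonally additive
mapping, then `f(x) = T(x) + S(x,x)` on `W₀` with `T : W → G` continuous and additive on
`W₀` and `S : W × W → G` continuous, sesquilinear and orthogonality preserving on
`W₀ × W₀`. -/
theorem continuous_orthogonally_additive_module_decomposition
    {A W : Type*}
    [NonUnitalNormedRing A] [StarRing A] [CStarRing A] [NormedSpace ℂ A]
    [IsScalarTower ℂ A A] [SMulCommClass ℂ A A] [StarModule ℂ A] [CompleteSpace A]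
    [NormedAddCommGroup W] [NormedSpace ℂ W] [CompleteSpace W]
    (M : HilbertModule A W)
    {G : Type*} [NormedAddCommGroup G] [NormedSpace ℂ G]
    (V : Set W)
    (hV0 : (0 : W) ∈ V)
    (hVadd : ∀ x ∈ V, ∀ y ∈ V, x + y ∈ V)
    (hVsmulC : ∀ (c : ℂ), ∀ x ∈ V, c • x ∈ V)
    (hVsmulA : ∀ x ∈ V, ∀ a : A, M.smul x a ∈ V)
    (φ : W → W)
    (hφmor : ∀ x ∈ V, ∀ y ∈ V, M.inner (φ x) (φ y) = M.inner x y)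
    (hφperp : ∀ x ∈ V, ∀ y ∈ V, M.inner (φ x) y = 0)
    (W₀ : Set W) (hW₀ : W₀ = {w : W | ∃ u ∈ V, ∃ v ∈ V, u + φ v = w})
    (f : W → G) (hfc : Continuous f)
    (hf : ∀ x y : W, M.inner x y = 0 → f (x + y) = f x + f y) :
    ∃ (T : W → G) (S : W → W → G),
      Continuous T ∧ Continuous (fun p : W × W => S p.1 p.2) ∧
      (∀ x ∈ W₀, ∀ y ∈ W₀, T (x + y) = T x + T y) ∧
      (∀ x ∈ W₀, ∀ y ∈ W₀, ∀ z ∈ W₀, S (x + y) z = S x z + S y z) ∧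
      (∀ x ∈ W₀, ∀ y ∈ W₀, ∀ z ∈ W₀, S x (y + z) = S x y + S x z) ∧
      (∀ (c : ℂ), ∀ x ∈ W₀, ∀ y ∈ W₀, S (c • x) y = c • S x y) ∧
      (∀ (c : ℂ), ∀ x ∈ W₀, ∀ y ∈ W₀, S x (c • y) = (starRingEnd ℂ) c • S x y) ∧
      (∀ x ∈ W₀, ∀ y ∈ W₀, M.inner x y = 0 → S x y = 0) ∧
      (∀ x ∈ W₀, f x = T x + S x x) :=
  continuous_orthogonally_additive_module_decomposition_general M V hV0 hVadd hVsmulC φ hφmor hφperp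
    W₀ hW₀ f hfc hf
end

section
/- Let W be a Hilbert C*-module over a C*-algebra A and let V be a fully complemented closed submodule of W, i.e. W = V ⊕ V^⊥ and there exists a surjective mapping u : W → V^⊥ with an adjoint u* : V^⊥ → W satisfying ⟨u(x), y⟩ = ⟨x, u*(y)⟩ for all x ∈ W, y ∈ V^⊥, u*u = id_W and uu* = id_{V^⊥}. Let G be a uniquely 2-divisible abelian group and let f : W → G be an orthogonally additive mapping. Then there exist mappings T : W → G and B : W × W → G such that T is additive on V, B is symmetric, biadditive and orthogonality preserving on V × V, and f(x) = T(x) + B(x, x) for all x ∈ V. -/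
/-- Corollary 3.2, first part.
Let `W` be a Hilbert C*-module over a C*-algebra `A` and `V` a fully complemented closed
submodule of `W` (i.e. `W = V ⊕ V^⊥` and there is a unitary equivalence `u : W → V^⊥`).
If `G` is a uniquely 2-divisible abelian group and `f : W → G` is orthogonally additive,
then `f(x) = T(x) + B(x,x)` on `V` with `T` additive on `V` and `B` symmetric, biadditive
and orthogonality preserving on `V × V`. -/
theorem orthogonally_additive_fully_complemented_decomposition
    {A W : Type*}
    [NonUnitalNormedRing A] [StarRing A] [CStarRing A] [NormedSpace ℂ A]
    [IsScalarTower ℂ A A] [SMulCommClass ℂ A A] [StarModule ℂ A] [CompleteSpace A]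
    [NormedAddCommGroup W] [NormedSpace ℂ W] [CompleteSpace W]
    (M : HilbertModule A W)
    {G : Type*} [AddCommGroup G]
    (hG2 : ∀ g : G, ∃! h : G, h + h = g)
    (V : Set W) (hVclosed : IsClosed V)
    (hV0 : (0 : W) ∈ V)
    (hVadd : ∀ x ∈ V, ∀ y ∈ V, x + y ∈ V)
    (hVsmulC : ∀ (c : ℂ), ∀ x ∈ V, c • x ∈ V)
    (hVsmulA : ∀ x ∈ V, ∀ a : A, M.smul x a ∈ V)
    (Vp : Set W) (hVp : Vp = {x : W | ∀ y ∈ V, M.inner x y = 0})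
    -- `W = V ⊕ V^⊥`
    (hcompl : ∀ w : W, ∃ v ∈ V, ∃ v' ∈ Vp, w = v + v')
    -- `u : W → V^⊥` is a unitary equivalence (`V` is *fully* complemented)
    (u : W → W) (hu_mem : ∀ x : W, u x ∈ Vp)
    (hu_surj : ∀ y ∈ Vp, ∃ x : W, u x = y)
    (ustar : W → W)
    (h_adj : ∀ (x : W), ∀ y ∈ Vp, M.inner (u x) y = M.inner x (ustar y))
    (h_ustar_u : ∀ x : W, ustar (u x) = x)
    (h_u_ustar : ∀ y ∈ Vp, u (ustar y) = y)
    (f : W → G)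
    (hf : ∀ x y : W, M.inner x y = 0 → f (x + y) = f x + f y) :
    ∃ (T : W → G) (B : W → W → G),
      (∀ x ∈ V, ∀ y ∈ V, T (x + y) = T x + T y) ∧
      (∀ x ∈ V, ∀ y ∈ V, B x y = B y x) ∧
      (∀ x ∈ V, ∀ y ∈ V, ∀ z ∈ V, B (x + y) z = B x z + B y z) ∧
      (∀ x ∈ V, ∀ y ∈ V, ∀ z ∈ V, B x (y + z) = B x y + B x z) ∧
      (∀ x ∈ V, ∀ y ∈ V, M.inner x y = 0 → B x y = 0) ∧
      (∀ x ∈ V, f x = T x + B x x) := by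
  classical
  -- basic inner product lemmas
  have izR : ∀ x : W, M.inner x 0 = 0 := by
    intro x
    have h := M.inner_add_right x 0 0
    rw [add_zero] at h
    exact left_eq_add.mp h
  have izL : ∀ x : W, M.inner 0 x = 0 := by
    intro x
    have h := M.inner_add_left 0 0 x
    rw [add_zero] at h
    exact left_eq_add.mp h
  have inegR : ∀ x y : W, M.inner x (-y) = -M.inner x y := by
    intro x y
    have h := M.inner_add_right x y (-y)
    rw [add_neg_cancel, izR] at h
    exact (neg_eq_of_add_eq_zero_right h.symm).symm
  have inegL : ∀ x y : W, M.inner (-x) y = -M.inner x y := by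
    intro x y
    have h := M.inner_add_left x (-x) y
    rw [add_neg_cancel, izL] at h
    exact (neg_eq_of_add_eq_zero_right h.symm).symm
  have isubL : ∀ x y z : W, M.inner (x - y) z = M.inner x z - M.inner y z := by
    intro x y z
    rw [sub_eq_add_neg, M.inner_add_left, inegL, ← sub_eq_add_neg]
  subst hVp
  have huV : ∀ w : W, ∀ v ∈ V, M.inner (u w) v = 0 := fun w v hv => hu_mem w v hv
  have huu : ∀ a b : W, M.inner (u a) (u b) = M.inner a b := by
    intro a b
    rw [h_adj a (u b) (hu_mem b), h_ustar_u b]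
  -- u is additive
  have hu_add : ∀ p q : W, u (p + q) = u p + u q := by
    intro p q
    have hmem : (u (p + q) - u p - u q) ∈ {x : W | ∀ y ∈ V, M.inner x y = 0} := by
      intro v hv
      rw [isubL, isubL, huV (p + q) v hv, huV p v hv, huV q v hv]
      simp
    have h0 : M.inner (u (p + q) - u p - u q) (u (p + q) - u p - u q) = 0 := by
      rw [isubL, isubL, h_adj (p + q) _ hmem, h_adj p _ hmem, h_adj q _ hmem,
        M.inner_add_left]
      abel
    have h1 : u (p + q) - u p - u q = 0 := (M.inner_self_eq_zero _).mp h0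
    have h2 : u (p + q) - (u p + u q) = 0 := by rw [← sub_sub]; exact h1
    exact sub_eq_zero.mp h2
  have hu_zero : u 0 = 0 := by
    have h := hu_add 0 0
    rw [add_zero] at h
    exact left_eq_add.mp h
  have f0 : f 0 = 0 := by
    have h := hf 0 0 (izR 0)
    rw [add_zero] at h
    exact left_eq_add.mp h
  -- closure lemmas
  have hVneg : ∀ x ∈ V, -x ∈ V := by
    intro x hx
    have h := hVsmulC (-1) x hx
    rwa [neg_one_smul] at h
  have hVsub : ∀ x ∈ V, ∀ y ∈ V, x - y ∈ V := by
    intro x hx y hy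
    rw [sub_eq_add_neg]
    exact hVadd x hx _ (hVneg y hy)
  -- the key orthogonality identity, for a general "copy" j
  have key : ∀ (F : W → G) (j : W → W),
      (∀ p q : W, M.inner p q = 0 → F (p + q) = F p + F q) →
      (∀ p q : W, j (p + q) = j p + j q) →
      (∀ p q : W, M.inner (j p) (j q) = M.inner p q) →
      (∀ w : W, ∀ v ∈ V, M.inner (j w) v = 0) →
      ∀ a ∈ V, ∀ b ∈ V,
        F (a + b) + F (j (a - b)) = F a + F (j a) + (F b + F (j (-b))) := by
    intro F j hFs hja hjj hjV a ha b hb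
    have hVj : ∀ v ∈ V, ∀ w : W, M.inner v (j w) = 0 := by
      intro v hv w
      rw [← M.star_inner, hjV w v hv, star_zero]
    have o1 : M.inner (a + j a) (b + j (-b)) = 0 := by
      rw [M.inner_add_left, M.inner_add_right, M.inner_add_right,
        hVj a ha (-b), hjV a b hb, hjj a (-b), inegR a b]
      abel
    have s1 : F (a + j a) = F a + F (j a) := hFs _ _ (hVj a ha a)
    have s2 : F (b + j (-b)) = F b + F (j (-b)) := hFs _ _ (hVj b hb (-b))
    have s3 : F (a + b + j (a - b)) = F (a + b) + F (j (a - b)) :=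
      hFs _ _ (hVj (a + b) (hVadd a ha b hb) (a - b))
    have e0 : F ((a + j a) + (b + j (-b))) = F (a + j a) + F (b + j (-b)) := hFs _ _ o1
    have rearr : (a + j a) + (b + j (-b)) = (a + b) + j (a - b) := by
      rw [sub_eq_add_neg, hja]
      abel
    rw [rearr, s3, s1, s2] at e0
    exact e0
  -- three instances
  have hE1 : ∀ a ∈ V, ∀ b ∈ V,
      f (a + b) + f (u (a - b)) = f a + f (u a) + (f b + f (u (-b))) :=
    key f u hf hu_add huu huV
  have j2add : ∀ p q : W, u (u (p + q)) = u (u p) + u (u q) := by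
    intro p q
    rw [hu_add, hu_add]
  have j2inner : ∀ p q : W, M.inner (u (u p)) (u (u q)) = M.inner p q := by
    intro p q
    rw [huu, huu]
  have j2V : ∀ w : W, ∀ v ∈ V, M.inner (u (u w)) v = 0 := fun w v hv => huV (u w) v hv
  have hE2 : ∀ a ∈ V, ∀ b ∈ V,
      f (a + b) + f (u (u (a - b))) = f a + f (u (u a)) + (f b + f (u (u (-b)))) :=
    key f (fun w => u (u w)) hf j2add j2inner j2V
  have hFs3 : ∀ p q : W, M.inner p q = 0 → f (u (p + q)) = f (u p) + f (u q) := by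
    intro p q h
    rw [hu_add]
    exact hf _ _ (by rw [huu]; exact h)
  have hE3 : ∀ a ∈ V, ∀ b ∈ V,
      f (u (a + b)) + f (u (u (a - b))) =
        f (u a) + f (u (u a)) + (f (u b) + f (u (u (-b)))) :=
    key (fun w => f (u w)) u hFs3 hu_add huu huV
  -- f - f∘u is additive on V
  have hADD : ∀ a ∈ V, ∀ b ∈ V,
      f (a + b) - f (u (a + b)) = (f a - f (u a)) + (f b - f (u b)) := by
    intro a ha b hb
    have h1 := hE2 a ha b hb
    have h2 := hE3 a ha b hb
    have h1' : f (a + b) =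
        f a + f (u (u a)) + (f b + f (u (u (-b)))) - f (u (u (a - b))) := by
      rw [eq_sub_iff_add_eq]
      exact h1
    have h2' : f (u (a + b)) =
        f (u a) + f (u (u a)) + (f (u b) + f (u (u (-b)))) - f (u (u (a - b))) := by
      rw [eq_sub_iff_add_eq]
      exact h2
    rw [h1', h2']
    abel
  -- Drygas equation for f on V
  have hDry : ∀ a ∈ V, ∀ b ∈ V,
      f (a + b) + f (a - b) = f a + f a + (f b + f (-b)) := by
    intro a ha b hb
    have e1 := hE1 a ha b hb
    have e2 := hADD a ha (-b) (hVneg b hb)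
    rw [← sub_eq_add_neg] at e2
    rw [sub_eq_iff_eq_add] at e2
    have e1' : f (a + b) = f a + f (u a) + (f b + f (u (-b))) - f (u (a - b)) := by
      rw [eq_sub_iff_add_eq]
      exact e1
    rw [e1', e2]
    abel
  -- halving in G
  have two_inj : ∀ a b : G, a + a = b + b → a = b := fun a b hab =>
    ExistsUnique.unique (hG2 (b + b)) hab rfl
  obtain ⟨half, half_spec⟩ : ∃ hlf : G → G, ∀ g, hlf g + hlf g = g :=
    ⟨fun g => (hG2 g).choose, fun g => (hG2 g).choose_spec.1⟩
  have half_add : ∀ a b : G, half (a + b) = half a + half b := by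
    intro a b
    apply two_inj
    rw [half_spec]
    rw [show half a + half b + (half a + half b)
        = (half a + half a) + (half b + half b) from by abel, half_spec, half_spec]
  have half_zero : half 0 = 0 := by
    apply two_inj
    rw [half_spec]
    simp
  have half_two : ∀ a : G, half (a + a) = a := by
    intro a
    apply two_inj
    rw [half_spec]
  -- halving in W
  have halfW : ∀ w : W, (2⁻¹ : ℂ) • (w + w) = w := by
    intro w
    have h2 : (2⁻¹ + 2⁻¹ : ℂ) = 1 := by norm_num
    rw [smul_add, ← add_smul, h2, one_smul]
  -- even part and parallelogram law
  set S : W → G := fun x => f x + f (-x) with hS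
  have hPar : ∀ a ∈ V, ∀ b ∈ V, S (a + b) + S (a - b) = S a + S a + (S b + S b) := by
    intro a ha b hb
    have d1 := hDry a ha b hb
    have d2 := hDry (-a) (hVneg a ha) (-b) (hVneg b hb)
    rw [neg_neg, show -a + -b = -(a + b) from by abel,
      show -a - -b = -(a - b) from by abel] at d2
    have d1' : f (a + b) = f a + f a + (f b + f (-b)) - f (a - b) := by
      rw [eq_sub_iff_add_eq]
      exact d1
    have d2' : f (-(a + b)) = f (-a) + f (-a) + (f (-b) + f b) - f (-(a - b)) := by
      rw [eq_sub_iff_add_eq]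
      exact d2
    simp only [hS]
    rw [d1', d2']
    abel
  have hS0 : S 0 = 0 := by
    simp only [hS, neg_zero, f0, add_zero]
  have hSdiag : ∀ x ∈ V, S (x + x) - S x - S x = S x + S x := by
    intro x hx
    have h := hPar x hx x hx
    rw [sub_self, hS0, add_zero] at h
    rw [h]
    abel
  -- cocycle identity for S
  have hco : ∀ x ∈ V, ∀ y ∈ V, ∀ z ∈ V,
      S (x + y + z) + (S x + (S y + S z)) = S (x + y) + (S (x + z) + S (y + z)) := by
    intro x hx y hy z hz
    have p1 := hPar (x + y) (hVadd x hx y hy) z hz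
    have p3 := hPar (x + z) (hVadd x hx z hz) y hy
    rw [show x + z + y = x + y + z from by abel] at p3
    have p2 := hPar x hx (y - z) (hVsub y hy z hz)
    rw [show x + (y - z) = x + y - z from by abel,
      show x - (y - z) = x + z - y from by abel] at p2
    have p4 := hPar y hy z hz
    have q1 : S (x + y + z) = S (x + y) + S (x + y) + (S z + S z) - S (x + y - z) := by
      rw [eq_sub_iff_add_eq]
      exact p1
    have q3 : S (x + y + z) = S (x + z) + S (x + z) + (S y + S y) - S (x + z - y) := by
      rw [eq_sub_iff_add_eq]
      exact p3
    have q2 : S (x + y - z) = S x + S x + (S (y - z) + S (y - z)) - S (x + z - y) := by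
      rw [eq_sub_iff_add_eq]
      exact p2
    have q4 : S (y - z) = S y + S y + (S z + S z) - S (y + z) := by
      rw [eq_sub_iff_add_eq, add_comm (S (y - z)) (S (y + z))]
      exact p4
    refine two_inj _ _ ?_
    nth_rewrite 1 [q1]
    rw [q3, q2, q4]
    abel
  -- conclusion
  refine ⟨fun x => half (f x - f (-x)),
    fun x y => half (half (S (x + y) - S x - S y)), ?_, ?_, ?_, ?_, ?_, ?_⟩
  · -- T additive on V
    intro x hx y hy
    obtain ⟨a, ha⟩ : ∃ a : W, a = (2⁻¹ : ℂ) • (x + y) := ⟨_, rfl⟩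
    obtain ⟨b, hb⟩ : ∃ b : W, b = (2⁻¹ : ℂ) • (x - y) := ⟨_, rfl⟩
    have haV : a ∈ V := by rw [ha]; exact hVsmulC _ _ (hVadd x hx y hy)
    have hbV : b ∈ V := by rw [hb]; exact hVsmulC _ _ (hVsub x hx y hy)
    have hab1 : a + b = x := by
      rw [ha, hb, ← smul_add, show (x + y) + (x - y) = x + x from by abel]
      exact halfW x
    have hab2 : a - b = y := by
      rw [ha, hb, ← smul_sub, show (x + y) - (x - y) = y + y from by abel]
      exact halfW y
    have haa : a + a = x + y := by
      rw [ha, ← smul_add]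
      exact halfW (x + y)
    have d1 := hDry a haV b hbV
    rw [hab1, hab2] at d1
    have d2 := hDry (-a) (hVneg a haV) (-b) (hVneg b hbV)
    rw [neg_neg, show -a + -b = -(a + b) from by abel,
      show -a - -b = -(a - b) from by abel, hab1, hab2] at d2
    have d3 := hDry a haV a haV
    rw [haa, sub_self, f0, add_zero] at d3
    have d4 := hDry (-a) (hVneg a haV) (-a) (hVneg a haV)
    rw [neg_neg, show -a + -a = -(a + a) from by abel, haa, sub_self, f0, add_zero] at d4
    have key1 : f (x + y) - f (-(x + y)) = (f x + f y) - (f (-x) + f (-y)) := by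
      rw [d3, d4, d1, d2]
      abel
    have htt : f (x + y) - f (-(x + y)) = (f x - f (-x)) + (f y - f (-y)) := by
      rw [key1]
      abel
    show half (f (x + y) - f (-(x + y))) = half (f x - f (-x)) + half (f y - f (-y))
    rw [htt, half_add]
  · -- B symmetric
    intro x hx y hy
    show half (half (S (x + y) - S x - S y)) = half (half (S (y + x) - S y - S x))
    rw [add_comm x y, show S (y + x) - S x - S y = S (y + x) - S y - S x from by abel]
  · -- B additive in first variable
    intro x hx y hy z hz
    show half (half (S (x + y + z) - S (x + y) - S z))
        = half (half (S (x + z) - S x - S z)) + half (half (S (y + z) - S y - S z))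
    rw [← half_add, ← half_add]
    have hq : S (x + y + z) = S (x + y) + (S (x + z) + S (y + z)) - (S x + (S y + S z)) := by
      rw [eq_sub_iff_add_eq]
      exact hco x hx y hy z hz
    rw [hq, show S (x + y) + (S (x + z) + S (y + z)) - (S x + (S y + S z)) - S (x + y) - S z
        = (S (x + z) - S x - S z) + (S (y + z) - S y - S z) from by abel]
  · -- B additive in second variable
    intro x hx y hy z hz
    show half (half (S (x + (y + z)) - S x - S (y + z)))
        = half (half (S (x + y) - S x - S y)) + half (half (S (x + z) - S x - S z))
    rw [← half_add, ← half_add, show x + (y + z) = x + y + z from (add_assoc x y z).symm]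
    have hq : S (x + y + z) = S (x + y) + (S (x + z) + S (y + z)) - (S x + (S y + S z)) := by
      rw [eq_sub_iff_add_eq]
      exact hco x hx y hy z hz
    rw [hq, show S (x + y) + (S (x + z) + S (y + z)) - (S x + (S y + S z)) - S x - S (y + z)
        = (S (x + y) - S x - S y) + (S (x + z) - S x - S z) from by abel]
  · -- B orthogonality preserving
    intro x hx y hy hxy
    show half (half (S (x + y) - S x - S y)) = 0
    have h1 : f (x + y) = f x + f y := hf x y hxy
    have h2 : f (-(x + y)) = f (-x) + f (-y) := by
      rw [show -(x + y) = -x + -y from by abel]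
      refine hf _ _ ?_
      rw [inegL, inegR, hxy]
      simp
    have h3 : S (x + y) - S x - S y = 0 := by
      simp only [hS]
      rw [h1, h2]
      abel
    rw [h3, half_zero, half_zero]
  · -- decomposition
    intro x hx
    show f x = half (f x - f (-x)) + half (half (S (x + x) - S x - S x))
    rw [hSdiag x hx, half_two, ← half_add,
      show f x - f (-x) + S x = f x + f x from by simp only [hS]; abel, half_two]
end

section
/- Let W be a Hilbert C*-module over a C*-algebra A and let V be a fully complemented closed submodule of W, i.e. W = V ⊕ V^⊥ and there exists a surjective mapping u : W → V^⊥ with an adjoint u* : V^⊥ → W satisfying ⟨u(x), y⟩ = ⟨x, u*(y)⟩ for all x ∈ W, y ∈ V^⊥, u*u = id_W and uu* = id_{V^⊥}. Let G be a complex normed space and let f : W → G be a continuous orthogonally additive mapping. Then there exist a continuous mapping T : W → G which is additive on V, and a continuous mapping S : W × W → G which is sesquilinear and orthogonality preserving on V × V, such that f(x) = T(x) + S(x, x) for all x ∈ V. -/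
/-- Corollary 3.2, second part.
Let `W` be a Hilbert C*-module over a C*-algebra `A` and `V` a fully complemented closed
submodule of `W` (i.e. `W = V ⊕ V^⊥` and there is a unitary equivalence `u : W → V^⊥`).
If `G` is a complex normed space and `f : W → G` is a continuous orthogonally additive
mapping, then `f(x) = T(x) + S(x,x)` on `V` with `T : W → G` continuous and additive on
`V` and `S : W × W → G` continuous, sesquilinear and orthogonality preserving on
`V × V`. -/
theorem continuous_orthogonally_additive_fully_complemented_decomposition
    {A W : Type*}
    [NonUnitalNormedRing A] [StarRing A] [CStarRing A] [NormedSpace ℂ A]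
    [IsScalarTower ℂ A A] [SMulCommClass ℂ A A] [StarModule ℂ A] [CompleteSpace A]
    [NormedAddCommGroup W] [NormedSpace ℂ W] [CompleteSpace W]
    (M : HilbertModule A W)
    {G : Type*} [NormedAddCommGroup G] [NormedSpace ℂ G]
    (V : Set W) (hVclosed : IsClosed V)
    (hV0 : (0 : W) ∈ V)
    (hVadd : ∀ x ∈ V, ∀ y ∈ V, x + y ∈ V)
    (hVsmulC : ∀ (c : ℂ), ∀ x ∈ V, c • x ∈ V)
    (hVsmulA : ∀ x ∈ V, ∀ a : A, M.smul x a ∈ V)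
    (Vp : Set W) (hVp : Vp = {x : W | ∀ y ∈ V, M.inner x y = 0})
    -- `W = V ⊕ V^⊥`
    (hcompl : ∀ w : W, ∃ v ∈ V, ∃ v' ∈ Vp, w = v + v')
    -- `u : W → V^⊥` is a unitary equivalence (`V` is *fully* complemented)
    (u : W → W) (hu_mem : ∀ x : W, u x ∈ Vp)
    (hu_surj : ∀ y ∈ Vp, ∃ x : W, u x = y)
    (ustar : W → W)
    (h_adj : ∀ (x : W), ∀ y ∈ Vp, M.inner (u x) y = M.inner x (ustar y))
    (h_ustar_u : ∀ x : W, ustar (u x) = x)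
    (h_u_ustar : ∀ y ∈ Vp, u (ustar y) = y)
    (f : W → G) (hfc : Continuous f)
    (hf : ∀ x y : W, M.inner x y = 0 → f (x + y) = f x + f y) :
    ∃ (T : W → G) (S : W → W → G),
      Continuous T ∧ Continuous (fun p : W × W => S p.1 p.2) ∧
      (∀ x ∈ V, ∀ y ∈ V, T (x + y) = T x + T y) ∧
      (∀ x ∈ V, ∀ y ∈ V, ∀ z ∈ V, S (x + y) z = S x z + S y z) ∧
      (∀ x ∈ V, ∀ y ∈ V, ∀ z ∈ V, S x (y + z) = S x y + S x z) ∧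
      (∀ (c : ℂ), ∀ x ∈ V, ∀ y ∈ V, S (c • x) y = c • S x y) ∧
      (∀ (c : ℂ), ∀ x ∈ V, ∀ y ∈ V, S x (c • y) = (starRingEnd ℂ) c • S x y) ∧
      (∀ x ∈ V, ∀ y ∈ V, M.inner x y = 0 → S x y = 0) ∧
      (∀ x ∈ V, f x = T x + S x x) := by
    classical
  -- basic inner product facts
  have inner_zero_right : ∀ x : W, M.inner x 0 = 0 := by
    intro x
    have h := M.inner_add_right x 0 0
    rw [add_zero] at h
    exact (left_eq_add.mp h)
  have inner_zero_left : ∀ x : W, M.inner 0 x = 0 := by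
    intro x
    rw [← M.star_inner, inner_zero_right, star_zero]
  have inner_neg_right : ∀ x y : W, M.inner x (-y) = -M.inner x y := by
    intro x y
    have h := M.inner_add_right x y (-y)
    rw [add_neg_cancel, inner_zero_right] at h
    exact (eq_neg_of_add_eq_zero_right h.symm)
  have inner_neg_left : ∀ x y : W, M.inner (-x) y = -M.inner x y := by
    intro x y
    rw [← M.star_inner, inner_neg_right, star_neg, M.star_inner]
  have inner_sub_left : ∀ x y z : W, M.inner (x - y) z = M.inner x z - M.inner y z := by
    intro x y z
    rw [sub_eq_add_neg, M.inner_add_left, inner_neg_left, ← sub_eq_add_neg]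
  have inner_sub_right : ∀ x y z : W, M.inner x (y - z) = M.inner x y - M.inner x z := by
    intro x y z
    rw [sub_eq_add_neg, M.inner_add_right, inner_neg_right, ← sub_eq_add_neg]
  have inner_smul_left : ∀ (c : ℂ) (x y : W),
      M.inner (c • x) y = (starRingEnd ℂ) c • M.inner x y := by
    intro c x y
    rw [← M.star_inner, M.inner_smul_complex, star_smul, M.star_inner, starRingEnd_apply]
  -- orthogonality of V against the range of u
  have o2 : ∀ (z : W), ∀ a ∈ V, M.inner (u z) a = 0 := by
    intro z a ha
    have h := hu_mem z
    rw [hVp] at h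
    exact h a ha
  have o1 : ∀ (z : W), ∀ a ∈ V, M.inner a (u z) = 0 := by
    intro z a ha
    rw [← M.star_inner, o2 z a ha, star_zero]
  have o3 : ∀ s t : W, M.inner (u s) (u t) = M.inner s t := by
    intro s t
    rw [h_adj s (u t) (hu_mem t), h_ustar_u]
  -- u is additive
  have u_add : ∀ x y : W, u (x + y) = u x + u y := by
    intro x y
    have key : M.inner (u (x + y) - (u x + u y)) (u (x + y) - (u x + u y)) = 0 := by
      simp only [inner_sub_left, inner_sub_right, M.inner_add_left, M.inner_add_right, o3]
      abel
    exact sub_eq_zero.mp ((M.inner_self_eq_zero _).mp key)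
  have u_zero : u 0 = 0 := by
    have h := u_add 0 0
    rw [add_zero] at h
    exact (left_eq_add.mp h)
  have hf0 : f 0 = 0 := by
    have h := hf 0 0 (inner_zero_left 0)
    rw [add_zero] at h
    exact (left_eq_add.mp h)
  have hVneg : ∀ x ∈ V, -x ∈ V := by
    intro x hx
    have := hVsmulC (-1 : ℂ) x hx
    rwa [neg_one_smul] at this
  -- the deviation from additivity
  set D : W → W → G := fun p q => f (p + q) - f p - f q with hDdef
  have Dorth : ∀ p q : W, M.inner p q = 0 → D p q = 0 := by
    intro p q h
    simp only [hDdef, hf p q h]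
    abel
  have Dsymm : ∀ p q : W, D p q = D q p := by
    intro p q
    simp only [hDdef, add_comm p q]
    abel
  have Dzero : ∀ q : W, D 0 q = 0 := by
    intro q
    simp only [hDdef, zero_add, hf0, sub_zero, sub_self]
  -- splitting f on triples  a + (u s + u (u r))
  have split3 : ∀ a ∈ V, ∀ s ∈ V, ∀ r : W,
      f (a + (u s + u (u r))) = f a + (f (u s) + f (u (u r))) := by
    intro a ha s hs r
    have h1 : M.inner (u s) (u (u r)) = 0 := by
      rw [o3, o1 r s hs]
    have h2 : M.inner a (u s + u (u r)) = 0 := by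
      rw [M.inner_add_right, o1 s a ha, o1 (u r) a ha, add_zero]
    rw [hf a _ h2, hf (u s) (u (u r)) h1]
  -- master lemma
  have M3 : ∀ x0 ∈ V, ∀ y0 ∈ V, ∀ x1 ∈ V, ∀ y1 ∈ V, ∀ x2 ∈ V, ∀ y2 ∈ V,
      M.inner x0 y0 + M.inner x1 y1 + M.inner x2 y2 = 0 →
      D x0 y0 + D (u x1) (u y1) + D (u (u x2)) (u (u y2)) = 0 := by
    intro x0 hx0 y0 hy0 x1 hx1 y1 hy1 x2 hx2 y2 hy2 hsum
    have hP := split3 x0 hx0 x1 hx1 x2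
    have hQ := split3 y0 hy0 y1 hy1 y2
    have horth : M.inner (x0 + (u x1 + u (u x2))) (y0 + (u y1 + u (u y2))) = 0 := by
      have h01 : M.inner x0 (u y1) = 0 := o1 y1 x0 hx0
      have h02 : M.inner x0 (u (u y2)) = 0 := o1 (u y2) x0 hx0
      have h10 : M.inner (u x1) y0 = 0 := o2 x1 y0 hy0
      have h12 : M.inner (u x1) (u (u y2)) = 0 := by rw [o3, o1 y2 x1 hx1]
      have h20 : M.inner (u (u x2)) y0 = 0 := o2 (u x2) y0 hy0
      have h21 : M.inner (u (u x2)) (u y1) = 0 := by rw [o3, o2 x2 y1 hy1]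
      simp only [M.inner_add_left, M.inner_add_right, h01, h02, h10, h12, h20, h21,
        o3, add_zero, zero_add]
      calc M.inner x0 y0 + (M.inner x1 y1 + M.inner x2 y2)
          = M.inner x0 y0 + M.inner x1 y1 + M.inner x2 y2 := by abel
        _ = 0 := hsum
    have hgrp : (x0 + (u x1 + u (u x2))) + (y0 + (u y1 + u (u y2)))
        = (x0 + y0) + (u (x1 + y1) + u (u (x2 + y2))) := by
      rw [u_add x1 y1, u_add x2 y2, u_add (u x2) (u y2)]
      abel
    have hPQ : f ((x0 + (u x1 + u (u x2))) + (y0 + (u y1 + u (u y2))))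
        = f (x0 + y0) + (f (u x1 + u y1) + f (u (u x2) + u (u y2))) := by
      rw [hgrp, split3 (x0 + y0) (hVadd x0 hx0 y0 hy0) (x1 + y1) (hVadd x1 hx1 y1 hy1)
        (x2 + y2), u_add x1 y1, u_add x2 y2, u_add (u x2) (u y2)]
    have main : f (x0 + y0) + (f (u x1 + u y1) + f (u (u x2) + u (u y2)))
        = (f x0 + (f (u x1) + f (u (u x2)))) + (f y0 + (f (u y1) + f (u (u y2)))) := by
      rw [← hPQ, hf _ _ horth, hP, hQ]
    have expand : D x0 y0 + D (u x1) (u y1) + D (u (u x2)) (u (u y2))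
        = (f (x0 + y0) + (f (u x1 + u y1) + f (u (u x2) + u (u y2))))
          - ((f x0 + (f (u x1) + f (u (u x2)))) + (f y0 + (f (u y1) + f (u (u y2))))) := by
      simp only [hDdef]
      abel
    rw [expand, main, sub_self]
  -- D on the u-shifted copy
  have hDu : ∀ b ∈ V, ∀ d ∈ V, D (u b) (u d) = - D b (-d) := by
    intro b hb d hd
    have h := M3 b hb (-d) (hVneg d hd) b hb d hd 0 hV0 0 hV0 (by
      rw [inner_neg_right, inner_zero_left]
      abel)
    simp only [u_zero] at h
    rw [Dzero, add_zero] at h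
    exact eq_neg_of_add_eq_zero_right h
  have hDuu : ∀ b ∈ V, ∀ d ∈ V, D (u (u b)) (u (u d)) = D b d := by
    intro b hb d hd
    have h := M3 0 hV0 0 hV0 b hb (-d) (hVneg d hd) b hb d hd (by
      rw [inner_neg_right, inner_zero_left]
      abel)
    rw [Dzero, zero_add, hDu b hb (-d) (hVneg d hd), neg_neg] at h
    exact (neg_add_eq_zero.mp h).symm
  -- D depends only on the inner product, on V
  have hWD : ∀ x ∈ V, ∀ y ∈ V, ∀ z ∈ V, ∀ w ∈ V,
      M.inner x y = M.inner z w → D x y = D z w := by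
    intro x hx y hy z hz w hw heq
    have h := M3 x hx y hy z hz (-w) (hVneg w hw) 0 hV0 0 hV0 (by
      rw [inner_neg_right, heq, inner_zero_left]
      abel)
    simp only [u_zero] at h
    rw [Dzero, add_zero, hDu z hz (-w) (hVneg w hw), neg_neg] at h
    exact add_neg_eq_zero.mp h
  -- oddness of D on V
  have hOdd : ∀ x ∈ V, ∀ y ∈ V, D x (-y) = - D x y := by
    intro x hx y hy
    have h := M3 x hx y hy 0 hV0 0 hV0 x hx (-y) (hVneg y hy) (by
      rw [inner_neg_right, inner_zero_left]
      abel)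
    simp only [u_zero] at h
    rw [Dzero, add_zero, hDuu x hx (-y) (hVneg y hy)] at h
    exact eq_neg_of_add_eq_zero_right h
  -- additivity of D on V
  have hAddL : ∀ x1 ∈ V, ∀ x2 ∈ V, ∀ y ∈ V, D (x1 + x2) y = D x1 y + D x2 y := by
    intro x1 hx1 x2 hx2 y hy
    have h := M3 x1 hx1 y hy x2 hx2 y hy (x1 + x2) (hVadd x1 hx1 x2 hx2) (-y) (hVneg y hy)
      (by rw [inner_neg_right, M.inner_add_left]; abel)
    rw [hDu x2 hx2 y hy, hDuu (x1 + x2) (hVadd x1 hx1 x2 hx2) (-y) (hVneg y hy),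
      hOdd x2 hx2 y hy, hOdd (x1 + x2) (hVadd x1 hx1 x2 hx2) y hy, neg_neg] at h
    exact (add_neg_eq_zero.mp h).symm
  have hAddR : ∀ x ∈ V, ∀ y1 ∈ V, ∀ y2 ∈ V, D x (y1 + y2) = D x y1 + D x y2 := by
    intro x hx y1 hy1 y2 hy2
    rw [Dsymm, hAddL y1 hy1 y2 hy2 x hx, Dsymm y1 x, Dsymm y2 x]
  -- scalar transfer
  have hSmul : ∀ (c : ℂ), ∀ x ∈ V, ∀ y ∈ V,
      D (c • x) y = D x ((starRingEnd ℂ) c • y) := by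
    intro c x hx y hy
    exact hWD (c • x) (hVsmulC c x hx) y hy x hx ((starRingEnd ℂ) c • y)
      (hVsmulC _ y hy)
      (by rw [inner_smul_left, M.inner_smul_complex])
  -- real scalars
  have hRealR : ∀ (t : ℝ), ∀ x ∈ V, ∀ y ∈ V, D x ((t : ℂ) • y) = (t : ℂ) • D x y := by
    intro t x hx y hy
    have hmemV : ∀ s : ℝ, (s : ℂ) • y ∈ V := fun s => hVsmulC _ y hy
    let φ : ℝ →+ G := AddMonoidHom.mk' (fun s => D x ((s : ℂ) • y)) (by
      intro s r
      have hsr : ((s + r : ℝ) : ℂ) • y = (s : ℂ) • y + (r : ℂ) • y := by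
        push_cast
        rw [add_smul]
      simp only [hsr]
      exact hAddR x hx _ (hmemV s) _ (hmemV r))
    have hφc : Continuous φ := by
      have c1 : Continuous fun s : ℝ => ((s : ℂ) • y : W) :=
        (Complex.continuous_ofReal).smul continuous_const
      show Continuous fun s : ℝ => D x ((s : ℂ) • y)
      simp only [hDdef]
      exact ((hfc.comp (continuous_const.add c1)).sub continuous_const).sub (hfc.comp c1)
    have h1 := map_real_smul φ hφc t 1
    have e1 : φ (t • (1 : ℝ)) = D x ((t : ℂ) • y) := by
      simp [φ, AddMonoidHom.mk'_apply, smul_eq_mul, mul_one]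
    have e2 : φ 1 = D x y := by
      simp [φ, AddMonoidHom.mk'_apply, Complex.ofReal_one, one_smul]
    rw [e1, e2] at h1
    rw [h1, Complex.coe_smul]
  have hRealL : ∀ (t : ℝ), ∀ x ∈ V, ∀ y ∈ V, D ((t : ℂ) • x) y = (t : ℂ) • D x y := by
    intro t x hx y hy
    rw [hSmul (t : ℂ) x hx y hy, Complex.conj_ofReal, hRealR t x hx y hy]
  -- I-scalar facts
  have hI_left : ∀ x ∈ V, ∀ y ∈ V, D (Complex.I • x) y = - D x (Complex.I • y) := by
    intro x hx y hy
    rw [hSmul Complex.I x hx y hy, Complex.conj_I, neg_smul,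
      hOdd x hx _ (hVsmulC Complex.I y hy)]
  have hI_II : ∀ x ∈ V, ∀ y ∈ V, D x (Complex.I • Complex.I • y) = - D x y := by
    intro x hx y hy
    rw [smul_smul, Complex.I_mul_I, neg_one_smul, hOdd x hx y hy]
  -- the sesquilinear part and the additive part
  set S : W → W → G := fun p q =>
    (2⁻¹ : ℂ) • D p q + ((2⁻¹ : ℂ) * Complex.I) • D p (Complex.I • q) with hSdef
  set T : W → G := fun p => f p - S p p with hTdef
  have memI : ∀ y ∈ V, Complex.I • y ∈ V := fun y hy => hVsmulC Complex.I y hy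
  -- S is additive in each variable on V
  have s_addL : ∀ x ∈ V, ∀ y ∈ V, ∀ z ∈ V, S (x + y) z = S x z + S y z := by
    intro x hx y hy z hz
    simp only [hSdef]
    rw [hAddL x hx y hy z hz, hAddL x hx y hy _ (memI z hz), smul_add, smul_add]
    abel
  have s_addR : ∀ x ∈ V, ∀ y ∈ V, ∀ z ∈ V, S x (y + z) = S x y + S x z := by
    intro x hx y hy z hz
    simp only [hSdef]
    rw [hAddR x hx y hy z hz, smul_add Complex.I y z,
      hAddR x hx _ (memI y hy) _ (memI z hz), smul_add, smul_add]
    abel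
  have s_realL : ∀ (t : ℝ), ∀ x ∈ V, ∀ y ∈ V, S ((t : ℂ) • x) y = (t : ℂ) • S x y := by
    intro t x hx y hy
    simp only [hSdef]
    rw [hRealL t x hx y hy, hRealL t x hx _ (memI y hy)]
    match_scalars <;> ring
  have s_realR : ∀ (t : ℝ), ∀ x ∈ V, ∀ y ∈ V, S x ((t : ℂ) • y) = (t : ℂ) • S x y := by
    intro t x hx y hy
    simp only [hSdef]
    rw [hRealR t x hx y hy, smul_comm Complex.I ((t : ℂ)) y,
      hRealR t x hx _ (memI y hy)]
    match_scalars <;> ring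
  have s_IL : ∀ x ∈ V, ∀ y ∈ V, S (Complex.I • x) y = Complex.I • S x y := by
    intro x hx y hy
    simp only [hSdef]
    rw [hI_left x hx y hy, hI_left x hx _ (memI y hy), hI_II x hx y hy]
    match_scalars <;>
      first
        | ring1
        | linear_combination ((1 : ℂ) / 2) * Complex.I_sq
        | linear_combination (-(1 : ℂ) / 2) * Complex.I_sq
  have s_IR : ∀ x ∈ V, ∀ y ∈ V, S x (Complex.I • y) = -(Complex.I • S x y) := by
    intro x hx y hy
    simp only [hSdef]
    rw [hI_II x hx y hy]
    match_scalars <;>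
      first
        | ring1
        | linear_combination ((1 : ℂ) / 2) * Complex.I_sq
        | linear_combination (-(1 : ℂ) / 2) * Complex.I_sq
  -- full complex homogeneity
  have s_smulL : ∀ (c : ℂ), ∀ x ∈ V, ∀ y ∈ V, S (c • x) y = c • S x y := by
    intro c x hx y hy
    have hdec : c • x = ((c.re : ℂ)) • x + ((c.im : ℂ)) • (Complex.I • x) := by
      rw [smul_smul, ← add_smul]
      congr 1
      exact (Complex.re_add_im c).symm
    rw [hdec, s_addL _ (hVsmulC _ x hx) _ (hVsmulC _ _ (memI x hx)) y hy,
      s_realL c.re x hx y hy]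
    have : S (((c.im : ℂ)) • (Complex.I • x)) y = ((c.im : ℂ)) • S (Complex.I • x) y :=
      s_realL c.im _ (memI x hx) y hy
    rw [this, s_IL x hx y hy, smul_smul, ← add_smul]
    congr 1
    exact Complex.re_add_im c
  have s_smulR : ∀ (c : ℂ), ∀ x ∈ V, ∀ y ∈ V,
      S x (c • y) = (starRingEnd ℂ) c • S x y := by
    intro c x hx y hy
    have hdec : c • y = ((c.re : ℂ)) • y + ((c.im : ℂ)) • (Complex.I • y) := by
      rw [smul_smul, ← add_smul]
      congr 1
      exact (Complex.re_add_im c).symm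
    rw [hdec, s_addR x hx _ (hVsmulC _ y hy) _ (hVsmulC _ _ (memI y hy)),
      s_realR c.re x hx y hy]
    have : S x (((c.im : ℂ)) • (Complex.I • y)) = ((c.im : ℂ)) • S x (Complex.I • y) :=
      s_realR c.im x hx _ (memI y hy)
    rw [this, s_IR x hx y hy, smul_neg, smul_smul, ← neg_smul, ← add_smul]
    congr 1
    have : (starRingEnd ℂ) c = (c.re : ℂ) - (c.im : ℂ) * Complex.I := by
      apply Complex.ext <;> simp
    rw [this]
    ring
  -- orthogonality preserving on V
  have s_orth : ∀ x ∈ V, ∀ y ∈ V, M.inner x y = 0 → S x y = 0 := by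
    intro x hx y hy h
    simp only [hSdef]
    rw [Dorth x y h, Dorth x (Complex.I • y) (by rw [M.inner_smul_complex, h, smul_zero]),
      smul_zero, smul_zero, add_zero]
  -- the key polarization identity
  have hsum : ∀ x ∈ V, ∀ y ∈ V, S x y + S y x = D x y := by
    intro x hx y hy
    simp only [hSdef]
    have h1 : D y x = D x y := Dsymm y x
    have h2 : D y (Complex.I • x) = - D x (Complex.I • y) := by
      rw [Dsymm]
      exact hI_left x hx y hy
    rw [h1, h2, smul_neg]
    have half : (2⁻¹ : ℂ) • D x y + (2⁻¹ : ℂ) • D x y = D x y := by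
      rw [← add_smul]
      norm_num
    calc (2⁻¹ : ℂ) • D x y + ((2⁻¹ : ℂ) * Complex.I) • D x (Complex.I • y)
          + ((2⁻¹ : ℂ) • D x y + -(((2⁻¹ : ℂ) * Complex.I) • D x (Complex.I • y)))
        = (2⁻¹ : ℂ) • D x y + (2⁻¹ : ℂ) • D x y := by abel
      _ = D x y := half
  -- T is additive on V
  have t_add : ∀ x ∈ V, ∀ y ∈ V, T (x + y) = T x + T y := by
    intro x hx y hy
    simp only [hTdef]
    have hfxy : f (x + y) = f x + f y + D x y := by
      simp only [hDdef]
      abel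
    have hSxy : S (x + y) (x + y) = S x x + S x y + (S y x + S y y) := by
      rw [s_addL x hx y hy (x + y) (hVadd x hx y hy), s_addR x hx x hx y hy,
        s_addR y hy x hx y hy]
    rw [hfxy, hSxy, ← hsum x hx y hy]
    abel
  -- continuity
  have hScont : Continuous (fun p : W × W => S p.1 p.2) := by
    simp only [hSdef]
    have c1 : Continuous fun p : W × W => f (p.1 + p.2) :=
      hfc.comp (continuous_fst.add continuous_snd)
    have c2 : Continuous fun p : W × W => f p.1 := hfc.comp continuous_fst
    have c3 : Continuous fun p : W × W => f p.2 := hfc.comp continuous_snd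
    have c4 : Continuous fun p : W × W => f (p.1 + Complex.I • p.2) :=
      hfc.comp (continuous_fst.add (continuous_snd.const_smul Complex.I))
    have c5 : Continuous fun p : W × W => f (Complex.I • p.2) :=
      hfc.comp (continuous_snd.const_smul Complex.I)
    simp only [hDdef]
    exact (((c1.sub c2).sub c3).const_smul _).add ((((c4.sub c2).sub c5)).const_smul _)
  have hTcont : Continuous T := by
    simp only [hTdef]
    exact hfc.sub (hScont.comp (continuous_id.prodMk continuous_id))
  refine ⟨T, S, hTcont, hScont, t_add, s_addL, ?_, s_smulL, s_smulR, s_orth, ?_⟩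
  · intro x hx y hy z hz
    exact s_addR x hx y hy z hz
  · intro x hx
    simp only [hTdef]
    abel
end
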